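/- arXiv:1901.10367 — 16 statements merged into one kernel-verified Lean document; each statement's English description precedes it below -/
import Mathlib

section
/- Let X be a topological space and let A be a regular closed subset of X. Then the interior of A cannot be represented as the union of two disjoint nonempty open sets if and only if for all regular closed subsets B, D of X with B ≠ ∅ and D ≠ ∅, if A = B ∪ D then it is not the case that B ∩ D ⊆ Cl(X \ A). -/
/-- For a regular closed subset `A` of a topological space `X`,
the interior of `A` cannot be represented as the union of two disjoint nonempty
open sets iff for all regular closed `B`, `D` with `B ≠ ∅`, `D ≠ ∅`,
if `A = B ∪ D` then `¬ (B ∩ D ⊆ Cl(X \ A))`. -/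
theorem internal_connectedness_iff_covering {X : Type*} [TopologicalSpace X]
    (A : Set X) (hA : closure (interior A) = A) :
    (¬ ∃ U V : Set X, IsOpen U ∧ IsOpen V ∧ U.Nonempty ∧ V.Nonempty ∧
        Disjoint U V ∧ interior A = U ∪ V) ↔
    (∀ B D : Set X, closure (interior B) = B → closure (interior D) = D →
        B ≠ ∅ → D ≠ ∅ → A = B ∪ D → ¬ (B ∩ D ⊆ closure (Aᶜ))) := by
  have hint : interior A ∩ closure (Aᶜ) = ∅ := by
    rw [closure_compl]
    simp [Set.inter_compl_self]
  constructor
  · intro h B D hB hD hBne hDne hBD hsub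
    apply h
    -- key: interior A ∩ (B ∩ D) = ∅
    have hkey : interior A ∩ (B ∩ D) = ∅ := by
      apply Set.eq_empty_of_subset_empty
      intro x hx
      rw [← hint]
      exact ⟨hx.1, hsub hx.2⟩
    refine ⟨interior A \ D, interior A \ B, ?_, ?_, ?_, ?_, ?_, ?_⟩
    · exact isOpen_interior.sdiff (hD ▸ isClosed_closure)
    · exact isOpen_interior.sdiff (hB ▸ isClosed_closure)
    · -- if interior A ⊆ D then D = A and B ⊆ closure Aᶜ, so B = ∅
      rw [Set.nonempty_iff_ne_empty]
      intro hemp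
      have hIAD : interior A ⊆ D := by
        intro x hx
        by_contra hxD
        exact absurd hemp (Set.nonempty_iff_ne_empty.mp ⟨x, hx, hxD⟩)
      have hDcl : IsClosed D := hD ▸ isClosed_closure
      have hAD : A ⊆ D := by
        rw [← hA, ← hDcl.closure_eq]
        exact closure_mono hIAD
      have hBA : B ⊆ A := hBD ▸ Set.subset_union_left
      have hBsub : B ⊆ closure (Aᶜ) := fun x hx => hsub ⟨hx, hAD (hBA hx)⟩
      have : interior B = ∅ := by
        apply Set.eq_empty_of_subset_empty
        intro x hx
        rw [← hint]
        exact ⟨interior_mono hBA hx, hBsub (interior_subset hx)⟩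
      rw [← hB, this, closure_empty] at hBne
      exact hBne rfl
    · rw [Set.nonempty_iff_ne_empty]
      intro hemp
      have hIAB : interior A ⊆ B := by
        intro x hx
        by_contra hxB
        exact absurd hemp (Set.nonempty_iff_ne_empty.mp ⟨x, hx, hxB⟩)
      have hBcl : IsClosed B := hB ▸ isClosed_closure
      have hAB : A ⊆ B := by
        rw [← hA, ← hBcl.closure_eq]
        exact closure_mono hIAB
      have hDA : D ⊆ A := hBD ▸ Set.subset_union_right
      have hDsub : D ⊆ closure (Aᶜ) := fun x hx => hsub ⟨hAB (hDA hx), hx⟩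
      have : interior D = ∅ := by
        apply Set.eq_empty_of_subset_empty
        intro x hx
        rw [← hint]
        exact ⟨interior_mono hDA hx, hDsub (interior_subset hx)⟩
      rw [← hD, this, closure_empty] at hDne
      exact hDne rfl
    · rw [Set.disjoint_iff_inter_eq_empty]
      apply Set.eq_empty_of_subset_empty
      rintro x ⟨⟨hx1, hxD⟩, _, hxB⟩
      have : x ∈ A := interior_subset hx1
      rw [hBD] at this
      rcases this with h | h
      · exact hxB h
      · exact hxD h
    · ext x
      constructor
      · intro hx
        by_cases hxB : x ∈ B
        · left
          refine ⟨hx, fun hxD => ?_⟩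
          have : x ∈ interior A ∩ (B ∩ D) := ⟨hx, hxB, hxD⟩
          rw [hkey] at this
          exact this.elim
        · right; exact ⟨hx, hxB⟩
      · rintro (⟨hx, _⟩ | ⟨hx, _⟩) <;> exact hx
  · rintro h ⟨U, V, hU, hV, hUne, hVne, hdisj, hUV⟩
    have hrcU : closure (interior (closure U)) = closure U :=
      Set.Subset.antisymm (closure_minimal interior_subset isClosed_closure)
        (closure_mono (interior_maximal subset_closure hU))
    have hrcV : closure (interior (closure V)) = closure V :=
      Set.Subset.antisymm (closure_minimal interior_subset isClosed_closure)
        (closure_mono (interior_maximal subset_closure hV))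
    have hA' : A = closure U ∪ closure V := by
      rw [← closure_union, ← hUV, hA]
    refine h (closure U) (closure V) hrcU hrcV ?_ ?_ hA' ?_
    · exact Set.nonempty_iff_ne_empty.mp (hUne.mono subset_closure)
    · exact Set.nonempty_iff_ne_empty.mp (hVne.mono subset_closure)
    · rintro x ⟨hxU, hxV⟩
      by_contra hxc
      have hxint : x ∈ interior A := by
        have : x ∈ (closure Aᶜ)ᶜ := hxc
        rwa [closure_compl, compl_compl] at this
      rw [hUV] at hxint
      rcases hxint with hx | hx
      · rcases (hU.mem_nhds hx : U ∈ nhds x) with _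
        have : (U ∩ V).Nonempty := mem_closure_iff.mp hxV U hU hx
        exact Set.not_nonempty_empty (Set.disjoint_iff_inter_eq_empty.mp hdisj ▸ this)
      · have : (V ∩ U).Nonempty := mem_closure_iff.mp hxU V hV hx
        exact Set.not_nonempty_empty (Set.disjoint_iff_inter_eq_empty.mp hdisj.symm ▸ this)
end

section
/- There exist finite topological spaces X and X′ and a bijection f from the set of regular closed subsets of X onto the set of regular closed subsets of X′ such that f(∅) = ∅, f(Cl_X(X \ A)) = Cl_{X′}(X′ \ f(A)) for all regular closed A, f(A ∪ B) = f(A) ∪ f(B) for all regular closed A, B, and for all regular closed A, B one has A ∩ B ≠ ∅ iff f(A) ∩ f(B) ≠ ∅; yet there is a regular closed subset A of X such that Int_X(A) cannot be represented as the union of two disjoint nonempty open sets while Int_{X′}(f(A)) can be so represented. Hence internal connectedness cannot be elementarily defined in terms of the contact relation within the class of all topological spaces. -/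
namespace ICND

def mkTop {α : Type} (N : α → α → Bool) : TopologicalSpace α where
  IsOpen s := ∀ x ∈ s, ∀ y, N x y = true → y ∈ s
  isOpen_univ := by intro x _ y _; trivial
  isOpen_inter := by
    intro s t hs ht x hx y hy
    exact ⟨hs x hx.1 y hy, ht x hx.2 y hy⟩
  isOpen_sUnion := by
    rintro S hS x ⟨s, hsS, hxs⟩ y hy
    exact ⟨s, hsS, hS s hsS x hxs y hy⟩

theorem isOpen_mkTop {α : Type} (N : α → α → Bool) (s : Set α) :
    @IsOpen α (mkTop N) s ↔ ∀ x ∈ s, ∀ y, N x y = true → y ∈ s := Iff.rfl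

theorem mem_interior_mkTop {α : Type} (N : α → α → Bool)
    (hrefl : ∀ x, N x x = true)
    (htrans : ∀ x y z, N x y = true → N y z = true → N x z = true)
    (s : Set α) (x : α) :
    x ∈ @interior α (mkTop N) s ↔ ∀ y, N x y = true → y ∈ s := by
  rw [@mem_interior]
  constructor
  · rintro ⟨t, hts, hto, hxt⟩ y hy
    exact hts (hto x hxt y hy)
  · intro h
    refine ⟨{z | ∀ y, N z y = true → y ∈ s}, ?_, ?_, h⟩
    · intro z hz; exact hz z (hrefl z)
    · intro z hz y hy w hw
      exact hz w (htrans z y w hy hw)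

theorem mem_closure_mkTop {α : Type} (N : α → α → Bool)
    (hrefl : ∀ x, N x x = true)
    (htrans : ∀ x y z, N x y = true → N y z = true → N x z = true)
    (s : Set α) (x : α) :
    x ∈ @closure α (mkTop N) s ↔ ∃ y, N x y = true ∧ y ∈ s := by
  rw [@mem_closure_iff]
  constructor
  · intro h
    obtain ⟨y, hy1, hy2⟩ := h {z | N x z = true}
      (fun z hz w hw => htrans x z w hz hw) (hrefl x)
    exact ⟨y, hy1, hy2⟩
  · rintro ⟨y, hxy, hys⟩ o ho hxo
    exact ⟨y, ho x hxo y hxy, hys⟩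

theorem exists_indicator {α : Type} (A : Set α) :
    ∃ f : α → Bool, A = {x | f x = true} := by
  classical
  exact ⟨fun x => decide (x ∈ A), by ext x; simp⟩

/-- Minimal neighborhoods for `X` (a "connected" 6-point space):
`N 0 = {0}`, `N 1 = {0,1,2}`, `N 2 = {2}`, `N 3 = {2,3,4}`, `N 4 = {4}`,
`N 5 = {0,4,5}`. -/
def nX (x y : Fin 6) : Bool :=
  ([(0,0),(1,0),(1,1),(1,2),(2,2),(3,2),(3,3),(3,4),(4,4),(5,0),(5,4),(5,5)] :
    List (Nat × Nat)).contains (x.1, y.1)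

/-- Minimal neighborhoods for `X'`: same but `N 5 = {0,2,4,5}`. -/
def nX' (x y : Fin 6) : Bool :=
  ([(0,0),(1,0),(1,1),(1,2),(2,2),(3,2),(3,3),(3,4),(4,4),(5,0),(5,2),(5,4),(5,5)] :
    List (Nat × Nat)).contains (x.1, y.1)

theorem nX_refl : ∀ x, nX x x = true := by decide
theorem nX_trans : ∀ x y z, nX x y = true → nX y z = true → nX x z = true := by decide
theorem nX'_refl : ∀ x, nX' x x = true := by decide
theorem nX'_trans : ∀ x y z, nX' x y = true → nX' y z = true → nX' x z = true := by decide

def tX : TopologicalSpace (Fin 6) := mkTop nX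
def tX' : TopologicalSpace (Fin 6) := mkTop nX'

theorem mint (s : Set (Fin 6)) (x : Fin 6) :
    x ∈ @interior _ tX s ↔ ∀ y, nX x y = true → y ∈ s :=
  mem_interior_mkTop nX nX_refl nX_trans s x

theorem mcl (s : Set (Fin 6)) (x : Fin 6) :
    x ∈ @closure _ tX s ↔ ∃ y, nX x y = true ∧ y ∈ s :=
  mem_closure_mkTop nX nX_refl nX_trans s x

theorem mint' (s : Set (Fin 6)) (x : Fin 6) :
    x ∈ @interior _ tX' s ↔ ∀ y, nX' x y = true → y ∈ s :=
  mem_interior_mkTop nX' nX'_refl nX'_trans s x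

theorem mcl' (s : Set (Fin 6)) (x : Fin 6) :
    x ∈ @closure _ tX' s ↔ ∃ y, nX' x y = true ∧ y ∈ s :=
  mem_closure_mkTop nX' nX'_refl nX'_trans s x

end ICND

namespace ICND

/-- Indicators of the 8 regular closed sets of `X`. -/
def A0 : Fin 6 → Bool := fun _ => false
def A1 : Fin 6 → Bool := fun x => decide (x = 0 ∨ x = 1 ∨ x = 5)
def A2 : Fin 6 → Bool := fun x => decide (x = 1 ∨ x = 2 ∨ x = 3)
def A3 : Fin 6 → Bool := fun x => decide (x = 3 ∨ x = 4 ∨ x = 5)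
def A4 : Fin 6 → Bool := fun x => decide (x = 0 ∨ x = 1 ∨ x = 2 ∨ x = 3 ∨ x = 5)
def A5 : Fin 6 → Bool := fun x => decide (x = 1 ∨ x = 2 ∨ x = 3 ∨ x = 4 ∨ x = 5)
def A6 : Fin 6 → Bool := fun x => decide (x = 0 ∨ x = 1 ∨ x = 3 ∨ x = 4 ∨ x = 5)
def A7 : Fin 6 → Bool := fun _ => true

/-- Indicators of the 8 regular closed sets of `X'`. -/
def B0 : Fin 6 → Bool := fun _ => false
def B1 : Fin 6 → Bool := fun x => decide (x = 0 ∨ x = 1 ∨ x = 5)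
def B2 : Fin 6 → Bool := fun x => decide (x = 1 ∨ x = 2 ∨ x = 3 ∨ x = 5)
def B3 : Fin 6 → Bool := fun x => decide (x = 3 ∨ x = 4 ∨ x = 5)
def B4 : Fin 6 → Bool := fun x => decide (x = 0 ∨ x = 1 ∨ x = 2 ∨ x = 3 ∨ x = 5)
def B5 : Fin 6 → Bool := fun x => decide (x = 1 ∨ x = 2 ∨ x = 3 ∨ x = 4 ∨ x = 5)
def B6 : Fin 6 → Bool := fun x => decide (x = 0 ∨ x = 1 ∨ x = 3 ∨ x = 4 ∨ x = 5)
def B7 : Fin 6 → Bool := fun _ => true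

set_option maxRecDepth 100000 in
theorem rc_casesX : ∀ a : Fin 6 → Bool,
    (∀ x, (∃ y, nX x y = true ∧ ∀ z, nX y z = true → a z = true) ↔ a x = true) →
    a = A0 ∨ a = A1 ∨ a = A2 ∨ a = A3 ∨ a = A4 ∨ a = A5 ∨ a = A6 ∨ a = A7 := by
  decide

set_option maxRecDepth 100000 in
theorem rc_casesX' : ∀ a : Fin 6 → Bool,
    (∀ x, (∃ y, nX' x y = true ∧ ∀ z, nX' y z = true → a z = true) ↔ a x = true) →
    a = B0 ∨ a = B1 ∨ a = B2 ∨ a = B3 ∨ a = B4 ∨ a = B5 ∨ a = B6 ∨ a = B7 := by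
  decide

end ICND

open ICND in
set_option maxRecDepth 100000 in
/-- There exist finite topological spaces `X`, `X'` and a bijection `f`
between their regular closed sets preserving `∅`, complement-closure, union and the
contact relation, yet mapping an internally connected regular closed set to one
that is not internally connected. -/
theorem internal_connectedness_not_definable_from_contact :
    ∃ (X X' : Type) (_ : TopologicalSpace X) (_ : TopologicalSpace X')
      (_ : Finite X) (_ : Finite X') (f : Set X → Set X'),
      (∀ A : Set X, closure (interior A) = A → closure (interior (f A)) = f A) ∧
      (∀ A B : Set X, closure (interior A) = A → closure (interior B) = B →
        f A = f B → A = B) ∧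
      (∀ A' : Set X', closure (interior A') = A' →
        ∃ A : Set X, closure (interior A) = A ∧ f A = A') ∧
      f ∅ = ∅ ∧
      (∀ A : Set X, closure (interior A) = A →
        f (closure (Aᶜ)) = closure ((f A)ᶜ)) ∧
      (∀ A B : Set X, closure (interior A) = A → closure (interior B) = B →
        f (A ∪ B) = f A ∪ f B) ∧
      (∀ A B : Set X, closure (interior A) = A → closure (interior B) = B →
        ((A ∩ B).Nonempty ↔ (f A ∩ f B).Nonempty)) ∧
      (∃ A : Set X, closure (interior A) = A ∧
        (¬ ∃ U V : Set X, IsOpen U ∧ IsOpen V ∧ U.Nonempty ∧ V.Nonempty ∧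
            Disjoint U V ∧ interior A = U ∪ V) ∧
        (∃ U V : Set X', IsOpen U ∧ IsOpen V ∧ U.Nonempty ∧ V.Nonempty ∧
            Disjoint U V ∧ interior (f A) = U ∪ V)) := by
  refine ⟨Fin 6, Fin 6, tX, tX', inferInstance, inferInstance,
    fun A => @closure _ tX' (@interior _ tX A), ?_, ?_, ?_, ?_, ?_, ?_, ?_, ?_⟩
  · -- f maps regular closed sets to regular closed sets
    intro A hA
    obtain ⟨a, rfl⟩ := exists_indicator A
    simp only [Set.ext_iff, mcl, mint, mcl', mint', Set.mem_setOf_eq] at hA ⊢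
    revert a; decide
  · -- injectivity on regular closed sets
    intro A B hA hB hAB
    obtain ⟨a, rfl⟩ := exists_indicator A
    obtain ⟨b, rfl⟩ := exists_indicator B
    simp only [Set.ext_iff, mcl, mint, mcl', mint', Set.mem_setOf_eq] at hA hB hAB ⊢
    rcases rc_casesX a hA with rfl | rfl | rfl | rfl | rfl | rfl | rfl | rfl <;>
      rcases rc_casesX b hB with rfl | rfl | rfl | rfl | rfl | rfl | rfl | rfl <;>
      · revert hAB; decide
  · -- surjectivity onto regular closed sets
    intro A' hA'
    obtain ⟨a, rfl⟩ := exists_indicator A'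
    simp only [Set.ext_iff, mcl', mint', Set.mem_setOf_eq] at hA'
    have mk : ∀ u v : Fin 6 → Bool,
        (∀ x, (∃ y, nX x y = true ∧ ∀ z, nX y z = true → u z = true) ↔ u x = true) →
        (∀ x, (∃ y, nX' x y = true ∧ ∀ z, nX y z = true → u z = true) ↔ v x = true) →
        ∃ A : Set (Fin 6), @closure _ tX (@interior _ tX A) = A ∧
          @closure _ tX' (@interior _ tX A) = {x | v x = true} := by
      intro u v h1 h2
      refine ⟨{x | u x = true}, ?_, ?_⟩
      · ext x
        simp only [mcl, mint, Set.mem_setOf_eq]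
        exact h1 x
      · ext x
        simp only [mcl', mint, Set.mem_setOf_eq]
        exact h2 x
    rcases rc_casesX' a hA' with rfl | rfl | rfl | rfl | rfl | rfl | rfl | rfl
    · exact mk A0 B0 (by decide) (by decide)
    · exact mk A1 B1 (by decide) (by decide)
    · exact mk A2 B2 (by decide) (by decide)
    · exact mk A3 B3 (by decide) (by decide)
    · exact mk A4 B4 (by decide) (by decide)
    · exact mk A5 B5 (by decide) (by decide)
    · exact mk A6 B6 (by decide) (by decide)
    · exact mk A7 B7 (by decide) (by decide)
  · -- f ∅ = ∅
    ext x
    simp only [mcl', mint, Set.mem_empty_iff_false, iff_false, not_exists, not_and]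
    revert x; decide
  · -- f commutes with complement-closure
    intro A hA
    obtain ⟨a, rfl⟩ := exists_indicator A
    simp only [Set.ext_iff, mcl, mint, mcl', mint', Set.mem_setOf_eq,
      Set.mem_compl_iff] at hA ⊢
    revert a; decide
  · -- f preserves unions
    intro A B hA hB
    obtain ⟨a, rfl⟩ := exists_indicator A
    obtain ⟨b, rfl⟩ := exists_indicator B
    simp only [Set.ext_iff, mcl, mint, mcl', mint', Set.mem_setOf_eq,
      Set.mem_union] at hA hB ⊢
    rcases rc_casesX a hA with rfl | rfl | rfl | rfl | rfl | rfl | rfl | rfl <;>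
      rcases rc_casesX b hB with rfl | rfl | rfl | rfl | rfl | rfl | rfl | rfl <;>
      decide
  · -- f preserves the contact relation
    intro A B hA hB
    obtain ⟨a, rfl⟩ := exists_indicator A
    obtain ⟨b, rfl⟩ := exists_indicator B
    simp only [Set.ext_iff, Set.nonempty_def, mcl, mint, mcl', mint',
      Set.mem_setOf_eq, Set.mem_inter_iff] at hA hB ⊢
    rcases rc_casesX a hA with rfl | rfl | rfl | rfl | rfl | rfl | rfl | rfl <;>
      rcases rc_casesX b hB with rfl | rfl | rfl | rfl | rfl | rfl | rfl | rfl <;>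
      decide
  · -- the witness: A = {0,1,3,4,5}
    have hint : @interior _ tX ({0, 1, 3, 4, 5} : Set (Fin 6)) = {0, 4, 5} := by
      ext x
      simp only [mint, Set.mem_insert_iff, Set.mem_singleton_iff]
      revert x; decide
    refine ⟨{0, 1, 3, 4, 5}, ?_, ?_, ?_⟩
    · ext x
      simp only [mcl, mint, Set.mem_insert_iff, Set.mem_singleton_iff]
      revert x; decide
    · rintro ⟨U, V, hU, hV, hUne, ⟨v0, hv0⟩, hdisj, heq⟩
      rw [hint] at heq
      have hU' := (isOpen_mkTop nX U).mp hU
      have hV' := (isOpen_mkTop nX V).mp hV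
      have h5 : (5 : Fin 6) ∈ U ∪ V := by
        rw [← heq]; right; right; rfl
      obtain ⟨u0, hu0⟩ := hUne
      have hd := Set.disjoint_left.mp hdisj
      rcases h5 with h5 | h5
      · -- then N 5 = {0,4,5} ⊆ U, so V ⊆ {0,4,5} ⊆ U, contradicting disjointness
        have h0 : (0 : Fin 6) ∈ U := hU' 5 h5 0 (by decide)
        have h4 : (4 : Fin 6) ∈ U := hU' 5 h5 4 (by decide)
        have hv0' : v0 ∈ ({0, 4, 5} : Set (Fin 6)) := heq ▸ Or.inr hv0
        rcases hv0' with h | h | h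
        · exact hd (h ▸ h0) hv0
        · exact hd (h ▸ h4) hv0
        · exact hd (h ▸ h5) hv0
      · have h0 : (0 : Fin 6) ∈ V := hV' 5 h5 0 (by decide)
        have h4 : (4 : Fin 6) ∈ V := hV' 5 h5 4 (by decide)
        have hu0' : u0 ∈ ({0, 4, 5} : Set (Fin 6)) := heq ▸ Or.inl hu0
        rcases hu0' with h | h | h
        · exact hd hu0 (h ▸ h0)
        · exact hd hu0 (h ▸ h4)
        · exact hd hu0 (h ▸ h5)
    · refine ⟨{0}, {4}, ?_, ?_, ⟨0, rfl⟩, ⟨4, rfl⟩, ?_, ?_⟩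
      · refine (isOpen_mkTop nX' _).mpr ?_
        simp only [Set.mem_singleton_iff]
        decide
      · refine (isOpen_mkTop nX' _).mpr ?_
        simp only [Set.mem_singleton_iff]
        decide
      · rw [Set.disjoint_left]
        simp only [Set.mem_singleton_iff]
        decide
      · ext x
        simp only [mint', mcl', mint, Set.mem_insert_iff, Set.mem_singleton_iff,
          Set.mem_union]
        revert x; decide
end

section
/- Let (R,0,*,∪,⊢) be an extended contact algebra and, for g ∈ R, define the relative contact relation RC(g) on R by RC(g)(a,b) iff not (a,b) ⊢ g. Then for all a,b,d,e,g ∈ R: (1) if RC(g)(a,b), a ≤ d and b ≤ e then RC(g)(d,e); (2) if RC(g)(a∪d, b∪e) then RC(g)(a,b) or RC(g)(a,e) or RC(g)(d,b) or RC(g)(d,e); (3) if RC(g)(a,b) then a ≰ g and b ≰ g; (4) if a ≰ g then RC(g)(a,a); (5) if RC(g)(a,b) then RC(g)(b,a). -/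
/-- Properties of the relative contact relation `RC(g)(a,b) ↔ ¬ (a,b) ⊢ g`
in an extended contact algebra. -/
theorem relative_contact_properties {R : Type*} [BooleanAlgebra R] [Nontrivial R]
    (vdash : R → R → R → Prop)
    (ECA1 : ∀ a b d e f : R, vdash a b f → vdash (a ⊔ d) (b ⊔ e) (d ⊔ e ⊔ f))
    (ECA2 : ∀ a b d e f : R, vdash a b d → vdash a b e → vdash d e f → vdash a b f)
    (ECA3 : ∀ a b f : R, (a ≤ f ∨ b ≤ f) → vdash a b f)
    (ECA4 : ∀ a b f : R, vdash a b f → a ⊓ b ≤ f)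
    (ECA5 : ∀ a b f : R, vdash a b f → vdash b a f)
    (RC : R → R → R → Prop)
    (hRC : ∀ g a b : R, RC g a b ↔ ¬ vdash a b g) :
    ∀ a b d e g : R,
      (RC g a b → a ≤ d → b ≤ e → RC g d e) ∧
      (RC g (a ⊔ d) (b ⊔ e) → RC g a b ∨ RC g a e ∨ RC g d b ∨ RC g d e) ∧
      (RC g a b → ¬ a ≤ g ∧ ¬ b ≤ g) ∧
      (¬ a ≤ g → RC g a a) ∧
      (RC g a b → RC g b a) := by
  -- monotonicity (contrapositive form): vdash is antitone in first two arguments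
  have mono : ∀ a b d e f : R, a ≤ d → b ≤ e → vdash d e f → vdash a b f := by
    intro a b d e f had hbe h
    exact ECA2 a b d e f (ECA3 a b d (Or.inl had)) (ECA3 a b e (Or.inr hbe)) h
  -- left additivity: (a,b)⊢f and (d,b)⊢f imply (a⊔d,b)⊢f
  have addl : ∀ a d b f : R, vdash a b f → vdash d b f → vdash (a ⊔ d) b f := by
    intro a d b f h1 h2
    have s1 : vdash (a ⊔ d) b (d ⊔ f) := by
      have := ECA1 a b d ⊥ f h1
      simpa using this
    have s2 : vdash (d ⊔ f) b f := by
      have := ECA1 d b f ⊥ f h2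
      simpa using this
    exact ECA2 (a ⊔ d) b (d ⊔ f) b f s1 (ECA3 (a ⊔ d) b b (Or.inr le_rfl)) s2
  have addr : ∀ a b e f : R, vdash a b f → vdash a e f → vdash a (b ⊔ e) f := by
    intro a b e f h1 h2
    exact ECA5 _ _ _ (addl b e a f (ECA5 _ _ _ h1) (ECA5 _ _ _ h2))
  intro a b d e g
  refine ⟨?_, ?_, ?_, ?_, ?_⟩
  · intro hab had hbe
    rw [hRC] at hab ⊢
    exact fun h => hab (mono a b d e g had hbe h)
  · intro h
    rw [hRC] at h
    by_contra hc
    push_neg at hc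
    obtain ⟨h1, h2, h3, h4⟩ := hc
    rw [hRC, not_not] at h1 h2 h3 h4
    exact h (addr (a ⊔ d) b e g (addl a d b g h1 h3) (addl a d e g h2 h4))
  · intro hab
    rw [hRC] at hab
    constructor
    · exact fun hag => hab (ECA3 a b g (Or.inl hag))
    · exact fun hbg => hab (ECA3 a b g (Or.inr hbg))
  · intro hag
    rw [hRC]
    intro h
    exact hag (by simpa using ECA4 a a g h)
  · intro hab
    rw [hRC] at hab ⊢
    exact fun h => hab (ECA5 b a g h)
end

section
/- Every extended contact algebra is a weak extended contact algebra: if (R,0,*,∪) is a non-degenerate Boolean algebra and ⊢ is a ternary relation on R satisfying (ECA1)–(ECA5), then ⊢ satisfies (WECA1)–(WECA4). -/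
/-- Every extended contact algebra is a weak extended contact algebra:
axioms (ECA1)–(ECA5) imply (WECA1)–(WECA4). -/
theorem eca_implies_weca {R : Type*} [BooleanAlgebra R] [Nontrivial R]
    (vdash : R → R → R → Prop)
    (ECA1 : ∀ a b d e f : R, vdash a b f → vdash (a ⊔ d) (b ⊔ e) (d ⊔ e ⊔ f))
    (ECA2 : ∀ a b d e f : R, vdash a b d → vdash a b e → vdash d e f → vdash a b f)
    (ECA3 : ∀ a b f : R, (a ≤ f ∨ b ≤ f) → vdash a b f)
    (ECA4 : ∀ a b f : R, vdash a b f → a ⊓ b ≤ f)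
    (ECA5 : ∀ a b f : R, vdash a b f → vdash b a f) :
    (∀ a b d e f : R, a ≤ d → b ≤ e → vdash d e f → vdash a b f) ∧
    (∀ a b f : R, (a = ⊥ ∨ b = ⊥) → vdash a b f) ∧
    (∀ a b d e f : R, vdash a b f → vdash d e f →
      vdash (a ⊓ d) (b ⊔ e) f ∧ vdash (a ⊔ d) (b ⊓ e) f) ∧
    (∀ a b d f : R, vdash a b d → d ≤ f → vdash a b f) := by
  -- WECA1: monotonicity
  have mono : ∀ a b d e f : R, a ≤ d → b ≤ e → vdash d e f → vdash a b f := by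
    intro a b d e f had hbe h
    exact ECA2 a b d e f (ECA3 a b d (Or.inl had)) (ECA3 a b e (Or.inr hbe)) h
  -- join lemma: vdash b c f → vdash e c f → vdash (b ⊔ e) c f
  have joinL : ∀ b e c f : R, vdash b c f → vdash e c f → vdash (b ⊔ e) c f := by
    intro b e c f h1 h2
    have h1' : vdash (b ⊔ e) c (e ⊔ f) := by
      have := ECA1 b c e ⊥ f h1
      simpa using this
    have h2' : vdash (e ⊔ f) c f := by
      have := ECA1 e c f ⊥ f h2
      simpa using this
    exact ECA2 (b ⊔ e) c (e ⊔ f) c f h1' (ECA3 (b ⊔ e) c c (Or.inr le_rfl)) h2'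
  refine ⟨mono, ?_, ?_, ?_⟩
  · intro a b f h
    rcases h with h | h
    · exact ECA3 a b f (Or.inl (h ▸ bot_le))
    · exact ECA3 a b f (Or.inr (h ▸ bot_le))
  · intro a b d e f h1 h2
    constructor
    · have hb : vdash b (a ⊓ d) f := ECA5 _ _ _ (mono (a ⊓ d) b a b f inf_le_left le_rfl h1)
      have he : vdash e (a ⊓ d) f := ECA5 _ _ _ (mono (a ⊓ d) e d e f inf_le_right le_rfl h2)
      exact ECA5 _ _ _ (joinL b e (a ⊓ d) f hb he)
    · have ha : vdash a (b ⊓ e) f := mono a (b ⊓ e) a b f le_rfl inf_le_left h1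
      have hd : vdash d (b ⊓ e) f := mono d (b ⊓ e) d e f le_rfl inf_le_right h2
      exact joinL a d (b ⊓ e) f ha hd
  · intro a b d f h hdf
    exact ECA2 a b d d f h h (ECA3 d d f (Or.inl hdf))
end

section
/- Let (W,R) be a parametrized frame: W a nonempty set and R a function assigning to each subset U of W a binary relation R(U) on W. Define the ternary relation ⊢_W on the powerset of W by (A,B) ⊢_W D iff for all s ∈ A, all t ∈ B and all U ⊆ W, if D ⊆ U then not R(U)(s,t). Then (𝒫(W), ∅, set complement, set union, ⊢_W) is a weak extended contact algebra, i.e., ⊢_W satisfies (WECA1)–(WECA4). -/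
/-- The powerset algebra of a parametrized frame, with the relation
`(A,B) ⊢_W D iff ∀ s ∈ A, ∀ t ∈ B, ∀ U ⊇ D, ¬ R(U)(s,t)`, is a weak extended
contact algebra: `⊢_W` satisfies (WECA1)–(WECA4). -/
theorem parametrized_frame_weca {W : Type*} [Nonempty W]
    (R : Set W → W → W → Prop)
    (vdash : Set W → Set W → Set W → Prop)
    (hvdash : ∀ A B D : Set W, vdash A B D ↔
      ∀ s ∈ A, ∀ t ∈ B, ∀ U : Set W, D ⊆ U → ¬ R U s t) :
    (∀ A B D E F : Set W, A ⊆ D → B ⊆ E → vdash D E F → vdash A B F) ∧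
    (∀ A B F : Set W, (A = ∅ ∨ B = ∅) → vdash A B F) ∧
    (∀ A B D E F : Set W, vdash A B F → vdash D E F →
      vdash (A ∩ D) (B ∪ E) F ∧ vdash (A ∪ D) (B ∩ E) F) ∧
    (∀ A B D F : Set W, vdash A B D → D ⊆ F → vdash A B F) := by
  simp only [hvdash] at *
  refine ⟨?_, ?_, ?_, ?_⟩
  · intro A B D E F hAD hBE h s hs t ht U hU
    exact h s (hAD hs) t (hBE ht) U hU
  · rintro A B F (rfl | rfl) s hs t ht U hU
    · exact absurd hs (Set.notMem_empty s)
    · exact absurd ht (Set.notMem_empty t)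
  · intro A B D E F h1 h2
    constructor
    · rintro s ⟨hsA, hsD⟩ t (htB | htE) U hU
      · exact h1 s hsA t htB U hU
      · exact h2 s hsD t htE U hU
    · rintro s (hsA | hsD) t ⟨htB, htE⟩ U hU
      · exact h1 s hsA t htB U hU
      · exact h2 s hsD t htE U hU
  · intro A B D F h hDF s hs t ht U hU
    exact h s hs t ht U (hDF.trans hU)
end

section
/- Let (R,0,*,∪,⊢_R) be a weak extended contact algebra. Then there exists a nonempty set W, a function R assigning to each subset U of W a binary relation R(U) on W, and an injective map h : R → 𝒫(W) such that h(0) = ∅, h(a*) = W \ h(a) for all a, h(a ∪ b) = h(a) ∪ h(b) for all a,b, and for all a,b,d ∈ R: (a,b) ⊢_R d iff for all s ∈ h(a), all t ∈ h(b) and all U ⊆ W, if h(d) ⊆ U then not R(U)(s,t). -/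
universe u

open Order

section Aux

variable {R : Type u} [BooleanAlgebra R]

/-- Separation: if ¬ a ≤ b then there is a prime ideal containing b but not a. -/
lemma weca_sep {a b : R} (hab : ¬ a ≤ b) :
    ∃ J : Order.Ideal R, J.IsPrime ∧ b ∈ J ∧ a ∉ J := by
  have hdisj : Disjoint ((Order.PFilter.principal a : Order.PFilter R) : Set R)
      ((Order.Ideal.principal b : Order.Ideal R) : Set R) := by
    rw [Set.disjoint_left]
    intro x hx hx'
    exact hab (le_trans hx hx')
  obtain ⟨J, hJp, hIJ, hdis⟩ := DistribLattice.prime_ideal_of_disjoint_filter_ideal hdisj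
  refine ⟨J, hJp, hIJ (Order.Ideal.mem_principal.mpr le_rfl), ?_⟩
  exact Set.disjoint_left.mp hdis (Order.PFilter.mem_principal.mpr le_rfl)

end Aux

/-- Relational representation of weak extended contact algebras in
parametrized frames. -/
theorem weca_relational_representation {R : Type u} [BooleanAlgebra R] [Nontrivial R]
    (vdash : R → R → R → Prop)
    (WECA1 : ∀ a b d e f : R, a ≤ d → b ≤ e → vdash d e f → vdash a b f)
    (WECA2 : ∀ a b f : R, (a = ⊥ ∨ b = ⊥) → vdash a b f)
    (WECA3 : ∀ a b d e f : R, vdash a b f → vdash d e f →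
      vdash (a ⊓ d) (b ⊔ e) f ∧ vdash (a ⊔ d) (b ⊓ e) f)
    (WECA4 : ∀ a b d f : R, vdash a b d → d ≤ f → vdash a b f) :
    ∃ (W : Type u) (_ : Nonempty W) (Rel : Set W → W → W → Prop) (h : R → Set W),
      Function.Injective h ∧
      h ⊥ = ∅ ∧
      (∀ a : R, h aᶜ = (h a)ᶜ) ∧
      (∀ a b : R, h (a ⊔ b) = h a ∪ h b) ∧
      (∀ a b d : R, vdash a b d ↔
        ∀ s ∈ h a, ∀ t ∈ h b, ∀ U : Set W, h d ⊆ U → ¬ Rel U s t) := by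
  classical
  set W : Type u := {I : Order.Ideal R // I.IsPrime} with hW
  set h : R → Set W := fun a => {I : W | a ∉ I.1} with hh
  -- existence of a prime ideal avoiding a given nonzero element
  have hex : ∀ a : R, a ≠ ⊥ → ∃ s : W, s ∈ h a := by
    intro a ha
    obtain ⟨J, hJp, _, haJ⟩ := weca_sep (a := a) (b := (⊥ : R)) (by simpa using ha)
    exact ⟨⟨J, hJp⟩, haJ⟩
  have hNE : Nonempty W := by
    obtain ⟨s, _⟩ := hex ⊤ (by simp)
    exact ⟨s⟩
  -- h is order-reflecting
  have hmono : ∀ a b : R, h a ⊆ h b ↔ a ≤ b := by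
    intro a b
    constructor
    · intro hsub
      by_contra hab
      obtain ⟨J, hJp, hbJ, haJ⟩ := weca_sep hab
      exact hsub (show (⟨J, hJp⟩ : W) ∈ h a from haJ) hbJ
    · intro hab I hI hbI
      exact hI (I.1.lower hab hbI)
  have hinj : Function.Injective h := fun a b hab =>
    le_antisymm ((hmono a b).mp hab.le) ((hmono b a).mp hab.ge)
  have hbot : h ⊥ = ∅ := by
    ext I; simp [hh, I.1.bot_mem]
  have hcompl : ∀ a : R, h aᶜ = (h a)ᶜ := by
    intro a
    ext I
    simp only [hh, Set.mem_setOf_eq, Set.mem_compl_iff, not_not]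
    constructor
    · intro hc
      rcases I.2.mem_or_compl_mem (x := a) with hm | hm
      · exact hm
      · exact absurd hm hc
    · intro ha hc
      have : (⊤ : R) ∈ I.1 := by
        have := I.1.sup_mem ha hc
        simpa using this
      exact (I.2.toIsProper.ne_univ) (by
        apply Set.eq_univ_of_forall; intro x; exact I.1.lower le_top this)
  have hsup : ∀ a b : R, h (a ⊔ b) = h a ∪ h b := by
    intro a b
    ext I
    simp only [hh, Set.mem_setOf_eq, Set.mem_union]
    constructor
    · intro hs
      by_contra hc
      push_neg at hc
      exact hs (I.1.sup_mem hc.1 hc.2)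
    · rintro (ha | ha) hs
      · exact ha (I.1.lower le_sup_left hs)
      · exact ha (I.1.lower le_sup_right hs)
  set Rel : Set W → W → W → Prop := fun U s t =>
    ∀ a b d : R, a ∉ s.1 → b ∉ t.1 → h d ⊆ U → ¬ vdash a b d with hRel
  refine ⟨W, hNE, Rel, h, hinj, hbot, hcompl, hsup, ?_⟩
  intro a b d
  constructor
  · intro hv s hs t ht U hU hrel
    exact hrel a b d hs ht hU hv
  · intro H
    by_cases hab : a = ⊥ ∨ b = ⊥
    · exact WECA2 a b d hab
    push_neg at hab
    -- reformulate H
    have H' : ∀ s t : W, a ∉ s.1 → b ∉ t.1 →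
        ∃ a' b', a' ∉ s.1 ∧ b' ∉ t.1 ∧ vdash a' b' d := by
      intro s t hs ht
      have hnr := H s hs t ht (h d) (subset_refl _)
      have hex2 : ∃ a' b' d', a' ∉ s.1 ∧ b' ∉ t.1 ∧ h d' ⊆ h d ∧ vdash a' b' d' := by
        by_contra hc
        push_neg at hc
        exact hnr (fun a' b' d' ha' hb' hd' hv => hc a' b' d' ha' hb' hd' hv)
      obtain ⟨a', b', d', ha', hb', hd', hv⟩ := hex2
      exact ⟨a', b', ha', hb', WECA4 a' b' d' d hv ((hmono d' d).mp hd')⟩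
    -- Step 2 ideal: G = {b' | vdash a b' d}
    -- Step 1: for every prime ideal t with b ∉ t, ∃ b' ∉ t, vdash a b' d
    have step1 : ∀ t : W, b ∉ t.1 → ∃ b', b' ∉ t.1 ∧ vdash a b' d := by
      intro t ht
      -- the ideal G_t = {a' | ∃ b' ∉ t, vdash a' b' d}
      set Gs : Set R := {a' | ∃ b', b' ∉ t.1 ∧ vdash a' b' d} with hGs
      have hGideal : IsIdeal Gs := by
        constructor
        · intro x y hxy hx
          obtain ⟨b', hb', hv⟩ := hx
          exact ⟨b', hb', WECA1 y b' x b' d hxy le_rfl hv⟩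
        · exact ⟨⊥, b, ht, WECA2 ⊥ b d (Or.inl rfl)⟩
        · intro x hx y hy
          obtain ⟨b1, hb1, hv1⟩ := hx
          obtain ⟨b2, hb2, hv2⟩ := hy
          refine ⟨x ⊔ y, ⟨b1 ⊓ b2, ?_, (WECA3 x b1 y b2 d hv1 hv2).2⟩, le_sup_left, le_sup_right⟩
          intro hm
          rcases t.2.mem_or_mem hm with hc | hc
          · exact hb1 hc
          · exact hb2 hc
      by_cases haG : a ∈ Gs
      · exact haG
      · exfalso
        have hdisj : Disjoint ((Order.PFilter.principal a : Order.PFilter R) : Set R)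
            ((hGideal.toIdeal : Order.Ideal R) : Set R) := by
          rw [Set.disjoint_left]
          intro x hx hx'
          exact haG (hGideal.1 hx hx')
        obtain ⟨J, hJp, hGJ, hdis⟩ :=
          DistribLattice.prime_ideal_of_disjoint_filter_ideal hdisj
        have haJ : a ∉ J :=
          fun hc => Set.disjoint_left.mp hdis (Order.PFilter.mem_principal.mpr le_rfl) hc
        obtain ⟨a', b', ha', hb', hv⟩ := H' ⟨J, hJp⟩ t haJ ht
        exact ha' (hGJ (show a' ∈ hGideal.toIdeal from ⟨b', hb', hv⟩))
    -- Step 2: conclude vdash a b d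
    set Gs : Set R := {b' | vdash a b' d} with hGs
    have hGideal : IsIdeal Gs := by
      constructor
      · intro x y hxy hx
        exact WECA1 a y a x d le_rfl hxy hx
      · exact ⟨⊥, WECA2 a ⊥ d (Or.inr rfl)⟩
      · intro x hx y hy
        refine ⟨x ⊔ y, ?_, le_sup_left, le_sup_right⟩
        have := (WECA3 a x a y d hx hy).1
        rw [inf_idem] at this
        exact this
    by_cases hbG : b ∈ Gs
    · exact hbG
    · exfalso
      have hdisj : Disjoint ((Order.PFilter.principal b : Order.PFilter R) : Set R)
          ((hGideal.toIdeal : Order.Ideal R) : Set R) := by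
        rw [Set.disjoint_left]
        intro x hx hx'
        exact hbG (hGideal.1 hx hx')
      obtain ⟨J, hJp, hGJ, hdis⟩ :=
        DistribLattice.prime_ideal_of_disjoint_filter_ideal hdisj
      have hbJ : b ∉ J :=
        fun hc => Set.disjoint_left.mp hdis (Order.PFilter.mem_principal.mpr le_rfl) hc
      obtain ⟨b', hb', hv⟩ := step1 ⟨J, hJp⟩ hbJ
      exact hb' (hGJ (show b' ∈ hGideal.toIdeal from hv))
end

section
/- Let (R,0,*,∪,⊢) be a weak extended contact algebra, let d ∈ R and let u be a filter in the Boolean algebra (R,0,*,∪). Then the set u^l = { b ∈ R : there exists a ∈ u with (a,b) ⊢ d } is an ideal in the Boolean algebra (R,0,*,∪): it contains 0, it is closed under binary join, and it is downward closed. -/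
/-- In a weak extended contact algebra, for a filter `u` and a region `d`,
the set `u^l = { b | ∃ a ∈ u, (a,b) ⊢ d }` is an ideal: it contains `⊥`, is closed
under binary join, and is downward closed. -/
theorem ul_is_ideal {R : Type*} [BooleanAlgebra R] [Nontrivial R]
    (vdash : R → R → R → Prop)
    (WECA1 : ∀ a b d e f : R, a ≤ d → b ≤ e → vdash d e f → vdash a b f)
    (WECA2 : ∀ a b f : R, (a = ⊥ ∨ b = ⊥) → vdash a b f)
    (WECA3 : ∀ a b d e f : R, vdash a b f → vdash d e f →
      vdash (a ⊓ d) (b ⊔ e) f ∧ vdash (a ⊔ d) (b ⊓ e) f)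
    (WECA4 : ∀ a b d f : R, vdash a b d → d ≤ f → vdash a b f)
    (d : R) (u : Set R)
    (hu_ne : u.Nonempty)
    (hu_up : ∀ a b : R, a ∈ u → a ≤ b → b ∈ u)
    (hu_inf : ∀ a b : R, a ∈ u → b ∈ u → a ⊓ b ∈ u) :
    (⊥ : R) ∈ {b : R | ∃ a ∈ u, vdash a b d} ∧
    (∀ b₁ b₂ : R, b₁ ∈ {b : R | ∃ a ∈ u, vdash a b d} →
      b₂ ∈ {b : R | ∃ a ∈ u, vdash a b d} →
      b₁ ⊔ b₂ ∈ {b : R | ∃ a ∈ u, vdash a b d}) ∧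
    (∀ b₁ b₂ : R, b₁ ∈ {b : R | ∃ a ∈ u, vdash a b d} → b₂ ≤ b₁ →
      b₂ ∈ {b : R | ∃ a ∈ u, vdash a b d}) := by
  refine ⟨?_, ?_, ?_⟩
  · obtain ⟨a, ha⟩ := hu_ne
    exact ⟨a, ha, WECA2 a ⊥ d (Or.inr rfl)⟩
  · rintro b₁ b₂ ⟨a₁, ha₁, h₁⟩ ⟨a₂, ha₂, h₂⟩
    exact ⟨a₁ ⊓ a₂, hu_inf a₁ a₂ ha₁ ha₂, (WECA3 a₁ b₁ a₂ b₂ d h₁ h₂).1⟩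
  · rintro b₁ b₂ ⟨a, ha, h⟩ hle
    exact ⟨a, ha, WECA1 a b₂ a b₁ d le_rfl hle h⟩
end

section
/- Let (W,R) be an equivalence frame of type 1: W a nonempty set and R an equivalence relation on W; write R(s) for the equivalence class of s. Define the ternary relation ⊢_W on the powerset of W by (A,B) ⊢_W D iff A ∩ B ⊆ D and for all s ∈ W, if R(s) intersects both A and B then R(s) intersects D. Then (𝒫(W), ∅, set complement, set union, ⊢_W) is an extended contact algebra, i.e., ⊢_W satisfies (ECA1)–(ECA5). -/
/-- The powerset algebra of an equivalence frame of type 1, with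
`(A,B) ⊢_W D iff A ∩ B ⊆ D and every equivalence class meeting both A and B meets D`,
is an extended contact algebra: `⊢_W` satisfies (ECA1)–(ECA5). -/
theorem equivalence_frame_type1_eca {W : Type*} [Nonempty W]
    (R : W → W → Prop) (hR : Equivalence R)
    (vdash : Set W → Set W → Set W → Prop)
    (hvdash : ∀ A B D : Set W, vdash A B D ↔
      (A ∩ B ⊆ D ∧ ∀ s : W, ({t : W | R s t} ∩ A).Nonempty →
        ({t : W | R s t} ∩ B).Nonempty → ({t : W | R s t} ∩ D).Nonempty)) :
    (∀ A B D E F : Set W, vdash A B F → vdash (A ∪ D) (B ∪ E) (D ∪ E ∪ F)) ∧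
    (∀ A B D E F : Set W, vdash A B D → vdash A B E → vdash D E F → vdash A B F) ∧
    (∀ A B F : Set W, (A ⊆ F ∨ B ⊆ F) → vdash A B F) ∧
    (∀ A B F : Set W, vdash A B F → A ∩ B ⊆ F) ∧
    (∀ A B F : Set W, vdash A B F → vdash B A F) := by
  simp only [hvdash] at *
  refine ⟨?_, ?_, ?_, ?_, ?_⟩
  · rintro A B D E F ⟨h1, h2⟩
    constructor
    · rintro x ⟨hx1, hx2⟩
      rcases hx1 with hA | hD
      · rcases hx2 with hB | hE
        · exact Or.inr (h1 ⟨hA, hB⟩)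
        · exact Or.inl (Or.inr hE)
      · exact Or.inl (Or.inl hD)
    · rintro s ⟨x, hxs, hx⟩ ⟨y, hys, hy⟩
      rcases hx with hA | hD
      · rcases hy with hB | hE
        · obtain ⟨z, hzs, hzF⟩ := h2 s ⟨x, hxs, hA⟩ ⟨y, hys, hB⟩
          exact ⟨z, hzs, Or.inr hzF⟩
        · exact ⟨y, hys, Or.inl (Or.inr hE)⟩
      · exact ⟨x, hxs, Or.inl (Or.inl hD)⟩
  · rintro A B D E F ⟨h1, h2⟩ ⟨h3, h4⟩ ⟨h5, h6⟩
    constructor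
    · intro x hx
      exact h5 ⟨h1 hx, h3 hx⟩
    · intro s hA hB
      exact h6 s (h2 s hA hB) (h4 s hA hB)
  · rintro A B F (h | h)
    · exact ⟨fun x hx => h hx.1, fun s ⟨x, hxs, hx⟩ _ => ⟨x, hxs, h hx⟩⟩
    · exact ⟨fun x hx => h hx.2, fun s _ ⟨x, hxs, hx⟩ => ⟨x, hxs, h hx⟩⟩
  · rintro A B F ⟨h1, _⟩
    exact h1
  · rintro A B F ⟨h1, h2⟩
    exact ⟨fun x hx => h1 ⟨hx.2, hx.1⟩, fun s hB hA => h2 s hA hB⟩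
end

section
/- Let (R,0,*,∪,⊢_R) be a finite extended contact algebra. Then there exists a finite nonempty set W, an equivalence relation E on W, and an injective map h : R → 𝒫(W) such that h(0) = ∅, h(a*) = W \ h(a) for all a, h(a ∪ b) = h(a) ∪ h(b) for all a,b, and for all a,b,d ∈ R: (a,b) ⊢_R d iff (h(a) ∩ h(b) ⊆ h(d) and for all s ∈ W, if the E-equivalence class of s intersects both h(a) and h(b) then it intersects h(d)). -/
universe u

/-- Every finite extended contact algebra embeds in the powerset
extended contact algebra of a finite equivalence frame of type 1. -/
theorem finite_eca_type1_representation {R : Type u} [BooleanAlgebra R] [Nontrivial R]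
    [Finite R]
    (vdash : R → R → R → Prop)
    (ECA1 : ∀ a b d e f : R, vdash a b f → vdash (a ⊔ d) (b ⊔ e) (d ⊔ e ⊔ f))
    (ECA2 : ∀ a b d e f : R, vdash a b d → vdash a b e → vdash d e f → vdash a b f)
    (ECA3 : ∀ a b f : R, (a ≤ f ∨ b ≤ f) → vdash a b f)
    (ECA4 : ∀ a b f : R, vdash a b f → a ⊓ b ≤ f)
    (ECA5 : ∀ a b f : R, vdash a b f → vdash b a f) :
    ∃ (W : Type u) (_ : Finite W) (_ : Nonempty W) (E : W → W → Prop)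
      (_ : Equivalence E) (h : R → Set W),
      Function.Injective h ∧
      h ⊥ = ∅ ∧
      (∀ a : R, h aᶜ = (h a)ᶜ) ∧
      (∀ a b : R, h (a ⊔ b) = h a ∪ h b) ∧
      (∀ a b d : R, vdash a b d ↔
        (h a ∩ h b ⊆ h d ∧ ∀ s : W, ({t : W | E s t} ∩ h a).Nonempty →
          ({t : W | E s t} ∩ h b).Nonempty → ({t : W | E s t} ∩ h d).Nonempty)) := by
  classical
  -- monotonicity in the third argument
  have mono3 : ∀ a b f g : R, vdash a b f → f ≤ g → vdash a b g := by
    intro a b f g hv hfg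
    exact ECA2 a b f f g hv hv (ECA3 f f g (Or.inl hfg))
  -- antitonicity in the first two arguments
  have anti12 : ∀ a' a b' b f : R, a' ≤ a → b' ≤ b → vdash a b f → vdash a' b' f := by
    intro a' a b' b f ha hb hv
    exact ECA2 a' b' a b f (ECA3 a' b' a (Or.inl ha)) (ECA3 a' b' b (Or.inr hb)) hv
  -- atoms exist below nonzero elements
  have atomic : ∀ x : R, x ≠ ⊥ → ∃ p : R, IsAtom p ∧ p ≤ x := by
    intro x hx
    rcases (inferInstance : IsAtomic R).eq_bot_or_exists_atom_le x with hc | hc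
    · exact absurd hc hx
    · exact hc
  have atom_le_of_ne : ∀ p a : R, IsAtom p → p ⊓ a ≠ ⊥ → p ≤ a := by
    intro p a hp hpa
    rcases hp.le_iff.mp (inf_le_left : p ⊓ a ≤ p) with hc | hc
    · exact absurd hc hpa
    · exact inf_eq_left.mp hc
  have atom_inf_eq_bot : ∀ p a : R, IsAtom p → ¬ p ≤ a → p ⊓ a = ⊥ := by
    intro p a hp hpa
    by_contra hc
    exact hpa (atom_le_of_ne p a hp hc)
  have compl_inf_bot_le : ∀ u v : R, uᶜ ⊓ v = ⊥ → v ≤ u := by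
    intro u v hv
    refine sdiff_eq_bot_iff.mp ?_
    rw [sdiff_eq, inf_comm]
    exact hv
  have atom_compl : ∀ p a : R, IsAtom p → (p ≤ aᶜ ↔ ¬ p ≤ a) := by
    intro p a hp
    constructor
    · intro h1 h2
      exact hp.1 (le_bot_iff.mp (le_of_le_of_eq (le_inf h2 h1) inf_compl_eq_bot))
    · intro h1
      exact le_compl_iff_disjoint_right.mpr (disjoint_iff.mpr (atom_inf_eq_bot p a hp h1))
  have atom_sup : ∀ p a b : R, IsAtom p → (p ≤ a ⊔ b ↔ p ≤ a ∨ p ≤ b) := by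
    intro p a b hp
    constructor
    · intro hle
      by_contra hc
      push_neg at hc
      have h1 := atom_inf_eq_bot p a hp hc.1
      have h2 := atom_inf_eq_bot p b hp hc.2
      refine hp.1 ?_
      calc p = p ⊓ (a ⊔ b) := (inf_eq_left.mpr hle).symm
        _ = p ⊓ a ⊔ p ⊓ b := inf_sup_left p a b
        _ = ⊥ := by rw [h1, h2, sup_idem]
    · rintro (hle | hle)
      · exact hle.trans le_sup_left
      · exact hle.trans le_sup_right
  -- "good" elements: unions of equivalence classes candidates
  let Good : R → Prop := fun c => ∀ x y z : R, vdash x y z → c ⊓ x ≠ ⊥ → c ⊓ y ≠ ⊥ → c ⊓ z ≠ ⊥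
  have good_atom : ∀ p : R, IsAtom p → Good p := by
    intro p hp x y z hxyz hx hy
    have hpx := atom_le_of_ne p x hp hx
    have hpy := atom_le_of_ne p y hp hy
    have hpz : p ≤ z := le_trans (le_inf hpx hpy) (ECA4 x y z hxyz)
    rw [inf_eq_left.mpr hpz]
    exact hp.1
  -- core lemma: witnesses for failure of vdash
  have core : ∀ a b d : R, ¬ vdash a b d →
      ∃ c : R, c ⊓ d = ⊥ ∧ c ⊓ a ≠ ⊥ ∧ c ⊓ b ≠ ⊥ ∧ Good c := by
    intro a b d hnv
    have hS : ({e : R | d ≤ e ∧ ¬ vdash a b e}).Finite := Set.toFinite _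
    obtain ⟨e, ⟨hde, hne⟩, hmax⟩ :=
      Set.Finite.exists_maximalFor id _ hS ⟨d, le_refl d, hnv⟩
    have key : ∀ w : R, eᶜ ⊓ w ≠ ⊥ → vdash a b (e ⊔ eᶜ ⊓ w) := by
      intro w hw
      by_contra hc
      have hmem : (e ⊔ eᶜ ⊓ w) ∈ {e : R | d ≤ e ∧ ¬ vdash a b e} :=
        ⟨hde.trans le_sup_left, hc⟩
      have heq : e = e ⊔ eᶜ ⊓ w := le_antisymm le_sup_left (hmax hmem le_sup_left)
      have hle : eᶜ ⊓ w ≤ e := le_sup_right.trans heq.ge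
      exact hw (le_bot_iff.mp (le_of_le_of_eq (le_inf hle inf_le_left) inf_compl_eq_bot))
    refine ⟨eᶜ, ?_, ?_, ?_, ?_⟩
    · exact le_bot_iff.mp
        (le_of_le_of_eq (inf_le_inf_left eᶜ hde) compl_inf_eq_bot)
    · intro hc
      exact hne (ECA3 a b e (Or.inl (compl_inf_bot_le e a hc)))
    · intro hc
      exact hne (ECA3 a b e (Or.inr (compl_inf_bot_le e b hc)))
    · intro x y z hxyz hx hy hz
      have hze : z ≤ e := compl_inf_bot_le e z hz
      have hxye : vdash x y e := mono3 x y z e hxyz hze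
      have hx'e : vdash (eᶜ ⊓ x) (eᶜ ⊓ y) e :=
        anti12 _ x _ y e inf_le_right inf_le_right hxye
      have h1 : vdash (eᶜ ⊓ x ⊔ e) (eᶜ ⊓ y ⊔ e) (e ⊔ e ⊔ e) := ECA1 _ _ e e e hx'e
      have h2 : vdash (e ⊔ eᶜ ⊓ x) (e ⊔ eᶜ ⊓ y) e := by
        rw [sup_comm e (eᶜ ⊓ x), sup_comm e (eᶜ ⊓ y)]
        simpa using h1
      exact hne (ECA2 a b _ _ e (key x hx) (key y hy) h2)
  -- the frame
  refine ⟨{pc : R × R // IsAtom pc.1 ∧ Good pc.2 ∧ pc.1 ≤ pc.2}, inferInstance, ?_,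
    fun s t => s.1.2 = t.1.2, ⟨fun _ => rfl, Eq.symm, Eq.trans⟩,
    fun a => {s | s.1.1 ≤ a}, ?_, ?_, ?_, ?_, ?_⟩
  · -- Nonempty
    obtain ⟨p, hp, -⟩ := atomic ⊤ top_ne_bot
    exact ⟨⟨(p, p), hp, good_atom p hp, le_refl p⟩⟩
  · -- Injective
    have key : ∀ u v : R,
        ({s : {pc : R × R // IsAtom pc.1 ∧ Good pc.2 ∧ pc.1 ≤ pc.2} | s.1.1 ≤ u}
          = {s | s.1.1 ≤ v}) → u ≤ v := by
      intro u v huv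
      by_contra hle
      have hub : u ⊓ vᶜ ≠ ⊥ := by
        intro hbot
        exact hle (sdiff_eq_bot_iff.mp (by rw [sdiff_eq]; exact hbot))
      obtain ⟨p, hp, hple⟩ := atomic _ hub
      have hpu : p ≤ u := hple.trans inf_le_left
      have hpv : ¬ p ≤ v := by
        intro hv
        exact hp.1 (le_bot_iff.mp
          (le_of_le_of_eq (le_inf hv (hple.trans inf_le_right)) inf_compl_eq_bot))
      have hs : (⟨(p, p), hp, good_atom p hp, le_refl p⟩ :
          {pc : R × R // IsAtom pc.1 ∧ Good pc.2 ∧ pc.1 ≤ pc.2}) ∈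
          {s : {pc : R × R // IsAtom pc.1 ∧ Good pc.2 ∧ pc.1 ≤ pc.2} | s.1.1 ≤ u} := hpu
      rw [huv] at hs
      exact hpv hs
    intro u v huv
    exact le_antisymm (key u v huv) (key v u huv.symm)
  · -- h ⊥ = ∅
    ext s
    simp only [Set.mem_setOf_eq, Set.mem_empty_iff_false, iff_false, le_bot_iff]
    exact s.2.1.1
  · -- complement
    intro a
    ext s
    simp only [Set.mem_setOf_eq, Set.mem_compl_iff]
    exact atom_compl s.1.1 a s.2.1
  · -- join
    intro a b
    ext s
    simp only [Set.mem_setOf_eq, Set.mem_union]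
    exact atom_sup s.1.1 a b s.2.1
  · -- the characterization of vdash
    intro a b d
    constructor
    · intro hv
      constructor
      · rintro s ⟨hsa, hsb⟩
        exact le_trans (le_inf hsa hsb) (ECA4 a b d hv)
      · rintro s ⟨t, ht, hta⟩ ⟨t', ht', htb⟩
        have hca : s.1.2 ⊓ a ≠ ⊥ := by
          intro hbot
          have hle : t.1.1 ≤ s.1.2 ⊓ a := le_inf (by rw [ht]; exact t.2.2.2) hta
          exact t.2.1.1 (le_bot_iff.mp (hle.trans_eq hbot))
        have hcb : s.1.2 ⊓ b ≠ ⊥ := by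
          intro hbot
          have hle : t'.1.1 ≤ s.1.2 ⊓ b := le_inf (by rw [ht']; exact t'.2.2.2) htb
          exact t'.2.1.1 (le_bot_iff.mp (hle.trans_eq hbot))
        have hcd : s.1.2 ⊓ d ≠ ⊥ := s.2.2.1 a b d hv hca hcb
        obtain ⟨r, hr, hrd⟩ := atomic _ hcd
        exact ⟨⟨(r, s.1.2), hr, s.2.2.1, hrd.trans inf_le_left⟩, rfl,
          hrd.trans inf_le_right⟩
    · rintro ⟨h1, h2⟩
      by_contra hnv
      obtain ⟨c, hcd, hca, hcb, hgood⟩ := core a b d hnv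
      obtain ⟨p, hp, hpca⟩ := atomic _ hca
      obtain ⟨q, hq, hqcb⟩ := atomic _ hcb
      obtain ⟨t, ht, htd⟩ := h2 ⟨(p, c), hp, hgood, hpca.trans inf_le_left⟩
        ⟨⟨(p, c), hp, hgood, hpca.trans inf_le_left⟩, rfl, hpca.trans inf_le_right⟩
        ⟨⟨(q, c), hq, hgood, hqcb.trans inf_le_left⟩, rfl, hqcb.trans inf_le_right⟩
      have hle : t.1.1 ≤ c ⊓ d := le_inf (by rw [show c = t.1.2 from ht]; exact t.2.2.2) htd
      exact t.2.1.1 (le_bot_iff.mp (hle.trans_eq hcd))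
end

section
/- Let X be a finite topological space, let W be the set of all pairs (E,s) where E is an atom of the Boolean algebra of regular closed subsets of X and s ∈ E, and let R be the equivalence relation on W given by R((E,s),(F,t)) iff s = t. For a regular closed subset A of X let h(A) = { (E,s) ∈ W : E ⊆ A }. Then for all regular closed subsets A, B, D of X: A ∩ B ⊆ D if and only if (h(A) ∩ h(B) ⊆ h(D) and for all w ∈ W, if the R-equivalence class of w intersects both h(A) and h(B) then it intersects h(D)). -/
/-- A subset of a topological space is regular closed if it equals the closure of
its interior. -/
def IsRegClosed {X : Type*} [TopologicalSpace X] (A : Set X) : Prop :=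
  closure (interior A) = A

/-- An atom of the Boolean algebra of regular closed subsets: a nonzero regular
closed set with no regular closed set strictly between it and `∅`. -/
def IsRegClosedAtom {X : Type*} [TopologicalSpace X] (E : Set X) : Prop :=
  IsRegClosed E ∧ E ≠ ∅ ∧ ∀ F : Set X, IsRegClosed F → F ⊆ E → F = ∅ ∨ F = E

/-- The set of pairs `(E, s)` where `E` is an atom of the Boolean algebra of regular
closed subsets of `X` and `s ∈ E`. -/
def AtomPoint (X : Type*) [TopologicalSpace X] : Type _ :=
  {p : Set X × X // IsRegClosedAtom p.1 ∧ p.2 ∈ p.1}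

/-- The equivalence relation on `AtomPoint X` identifying pairs with the same point. -/
def AtomPointRel {X : Type*} [TopologicalSpace X] (w w' : AtomPoint X) : Prop :=
  w.val.2 = w'.val.2

/-- The embedding of regular closed sets into subsets of `AtomPoint X`. -/
def atomEmbed {X : Type*} [TopologicalSpace X] (A : Set X) : Set (AtomPoint X) :=
  {w : AtomPoint X | w.val.1 ⊆ A}

lemma IsRegClosed.isClosed {X : Type*} [TopologicalSpace X] {A : Set X}
    (h : IsRegClosed A) : IsClosed A := h ▸ isClosed_closure

lemma isRegClosed_closure_of_isOpen {X : Type*} [TopologicalSpace X] {V : Set X}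
    (hV : IsOpen V) : IsRegClosed (closure V) := by
  apply subset_antisymm
  · exact (closure_mono interior_subset).trans closure_closure.subset
  · exact closure_mono (interior_maximal subset_closure hV)

lemma exists_atom_subset {X : Type*} [TopologicalSpace X] [Finite X] {C : Set X}
    (hC : IsRegClosed C) (hne : C ≠ ∅) :
    ∃ F, IsRegClosedAtom F ∧ F ⊆ C := by
  have hwf : WellFoundedLT (Set X) := Finite.to_wellFoundedLT
  obtain ⟨F, ⟨hF, hFC, hFne⟩, hmin⟩ := hwf.wf.has_min
    {F | IsRegClosed F ∧ F ⊆ C ∧ F ≠ ∅} ⟨C, hC, subset_rfl, hne⟩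
  refine ⟨F, ⟨hF, hFne, ?_⟩, hFC⟩
  intro G hG hGF
  by_contra h
  rcases not_or.mp h with ⟨h1, h2⟩
  exact hmin G ⟨hG, hGF.trans hFC, h1⟩ (lt_of_le_of_ne hGF h2)

lemma regClosed_eq_sUnion_atoms {X : Type*} [TopologicalSpace X] [Finite X] {D : Set X}
    (hD : IsRegClosed D) :
    D = ⋃₀ {E | IsRegClosedAtom E ∧ E ⊆ D} := by
  set U := ⋃₀ {E | IsRegClosedAtom E ∧ E ⊆ D} with hU
  have hUD : U ⊆ D := Set.sUnion_subset fun E hE => hE.2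
  have hUclosed : IsClosed U := by
    rw [hU, Set.sUnion_eq_biUnion]
    exact (Set.toFinite _).isClosed_biUnion fun E hE => hE.1.1.isClosed
  refine subset_antisymm ?_ hUD
  by_contra hnot
  have hIntU : ¬ interior D ⊆ U := by
    intro h
    exact hnot (by
      calc D = closure (interior D) := hD.symm
        _ ⊆ closure U := closure_mono h
        _ = U := hUclosed.closure_eq)
  obtain ⟨x, hxI, hxU⟩ := Set.not_subset.mp hIntU
  set V := interior D ∩ Uᶜ with hV
  have hVopen : IsOpen V := isOpen_interior.inter hUclosed.isOpen_compl
  have hCne : closure V ≠ ∅ := by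
    intro h
    have : x ∈ closure V := subset_closure ⟨hxI, hxU⟩
    simp [h] at this
  have hCD : closure V ⊆ D := by
    calc closure V ⊆ closure (interior D) := closure_mono (Set.inter_subset_left)
      _ = D := hD
  obtain ⟨F, hF, hFC⟩ := exists_atom_subset (isRegClosed_closure_of_isOpen hVopen) hCne
  have hFU : F ⊆ U := Set.subset_sUnion_of_mem ⟨hF, hFC.trans hCD⟩
  have hIntF : (interior F).Nonempty := by
    rcases Set.eq_empty_or_nonempty (interior F) with h | h
    · exact absurd (by rw [← hF.1, h, closure_empty]) hF.2.1
    · exact h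
  obtain ⟨y, hy⟩ := hIntF
  have hyC : y ∈ closure V := hFC (interior_subset hy)
  obtain ⟨z, hzF, hzV⟩ := mem_closure_iff.mp hyC (interior F) isOpen_interior hy
  exact hzV.2 (hFU (interior_subset hzF))

lemma exists_atom_mem {X : Type*} [TopologicalSpace X] [Finite X] {D : Set X}
    (hD : IsRegClosed D) {s : X} (hs : s ∈ D) :
    ∃ E, IsRegClosedAtom E ∧ E ⊆ D ∧ s ∈ E := by
  rw [regClosed_eq_sUnion_atoms hD] at hs
  obtain ⟨E, ⟨hE, hED⟩, hsE⟩ := hs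
  exact ⟨E, hE, hED, hsE⟩

/-- In a finite topological space, for regular closed `A`, `B`, `D`:
`A ∩ B ⊆ D` iff `h(A) ∩ h(B) ⊆ h(D)` and every `R`-equivalence class meeting both
`h(A)` and `h(B)` meets `h(D)`. -/
theorem covering_iff_frame_covering {X : Type*} [TopologicalSpace X] [Finite X]
    (A B D : Set X) (hA : IsRegClosed A) (hB : IsRegClosed B) (hD : IsRegClosed D) :
    A ∩ B ⊆ D ↔
      (atomEmbed A ∩ atomEmbed B ⊆ atomEmbed D ∧
        ∀ w : AtomPoint X,
          ({w' : AtomPoint X | AtomPointRel w w'} ∩ atomEmbed A).Nonempty →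
          ({w' : AtomPoint X | AtomPointRel w w'} ∩ atomEmbed B).Nonempty →
          ({w' : AtomPoint X | AtomPointRel w w'} ∩ atomEmbed D).Nonempty) := by
  constructor
  · intro h
    refine ⟨fun w hw => (Set.subset_inter hw.1 hw.2).trans h, ?_⟩
    rintro w ⟨w1, hr1, hw1A⟩ ⟨w2, hr2, hw2B⟩
    have hsA : w.val.2 ∈ A := hr1 ▸ hw1A w1.prop.2
    have hsB : w.val.2 ∈ B := hr2 ▸ hw2B w2.prop.2
    obtain ⟨E, hE, hED, hsE⟩ := exists_atom_mem hD (h ⟨hsA, hsB⟩)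
    exact ⟨⟨(E, w.val.2), hE, hsE⟩, rfl, hED⟩
  · rintro ⟨h1, h2⟩ s ⟨hsA, hsB⟩
    obtain ⟨E, hE, hEA, hsE⟩ := exists_atom_mem hA hsA
    obtain ⟨F, hF, hFB, hsF⟩ := exists_atom_mem hB hsB
    obtain ⟨w', hr, hw'D⟩ := h2 ⟨(E, s), hE, hsE⟩
      ⟨⟨(E, s), hE, hsE⟩, rfl, hEA⟩ ⟨⟨(F, s), hF, hsF⟩, rfl, hFB⟩
    have hs' : s = w'.val.2 := hr
    exact hs' ▸ hw'D w'.prop.2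
end

section
/- Let (W,R₁,R₂) be an equivalence frame of type 2: W a nonempty set and R₁, R₂ equivalence relations on W; for s ∈ W let R₁(R₂(s)) denote the union of the R₁-equivalence classes of all t in the R₂-equivalence class of s. Define the ternary relation ⊢_W on the powerset of W by (A,B) ⊢_W D iff A ∩ B ⊆ D and for all s ∈ W, if R₁(R₂(s)) intersects both A and B then R₁(R₂(s)) intersects D. Then (𝒫(W), ∅, set complement, set union, ⊢_W) is an extended contact algebra, i.e., ⊢_W satisfies (ECA1)–(ECA5). -/
/-- The powerset algebra of an equivalence frame of type 2, with
`(A,B) ⊢_W D iff A ∩ B ⊆ D and for all s, if R₁(R₂(s)) meets both A and B then it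
meets D`, is an extended contact algebra: `⊢_W` satisfies (ECA1)–(ECA5). -/
theorem equivalence_frame_type2_eca {W : Type*} [Nonempty W]
    (R₁ R₂ : W → W → Prop) (hR₁ : Equivalence R₁) (hR₂ : Equivalence R₂)
    (vdash : Set W → Set W → Set W → Prop)
    (hvdash : ∀ A B D : Set W, vdash A B D ↔
      (A ∩ B ⊆ D ∧ ∀ s : W,
        ({x : W | ∃ t : W, R₂ s t ∧ R₁ t x} ∩ A).Nonempty →
        ({x : W | ∃ t : W, R₂ s t ∧ R₁ t x} ∩ B).Nonempty →
        ({x : W | ∃ t : W, R₂ s t ∧ R₁ t x} ∩ D).Nonempty)) :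
    (∀ A B D E F : Set W, vdash A B F → vdash (A ∪ D) (B ∪ E) (D ∪ E ∪ F)) ∧
    (∀ A B D E F : Set W, vdash A B D → vdash A B E → vdash D E F → vdash A B F) ∧
    (∀ A B F : Set W, (A ⊆ F ∨ B ⊆ F) → vdash A B F) ∧
    (∀ A B F : Set W, vdash A B F → A ∩ B ⊆ F) ∧
    (∀ A B F : Set W, vdash A B F → vdash B A F) := by
  refine ⟨?_, ?_, ?_, ?_, ?_⟩
  · -- ECA1
    intro A B D E F h
    rw [hvdash] at h ⊢
    obtain ⟨h1, h2⟩ := h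
    constructor
    · rintro x ⟨hx1 | hx1, hx2 | hx2⟩
      · exact Or.inr (h1 ⟨hx1, hx2⟩)
      · exact Or.inl (Or.inr hx2)
      · exact Or.inl (Or.inl hx1)
      · exact Or.inl (Or.inl hx1)
    · rintro s ⟨x, hxc, hx⟩ ⟨y, hyc, hy⟩
      rcases hx with hxA | hxD
      · rcases hy with hyB | hyE
        · obtain ⟨z, hzc, hzF⟩ := h2 s ⟨x, hxc, hxA⟩ ⟨y, hyc, hyB⟩
          exact ⟨z, hzc, Or.inr hzF⟩
        · exact ⟨y, hyc, Or.inl (Or.inr hyE)⟩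
      · exact ⟨x, hxc, Or.inl (Or.inl hxD)⟩
  · -- ECA2
    intro A B D E F hD hE hF
    rw [hvdash] at hD hE hF ⊢
    constructor
    · intro x hx
      exact hF.1 ⟨hD.1 hx, hE.1 hx⟩
    · intro s hA hB
      exact hF.2 s (hD.2 s hA hB) (hE.2 s hA hB)
  · -- ECA3
    intro A B F h
    rw [hvdash]
    rcases h with h | h
    · exact ⟨fun x hx => h hx.1, fun s ⟨x, hxc, hxA⟩ _ => ⟨x, hxc, h hxA⟩⟩
    · exact ⟨fun x hx => h hx.2, fun s _ ⟨x, hxc, hxB⟩ => ⟨x, hxc, h hxB⟩⟩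
  · -- ECA4
    intro A B F h
    exact ((hvdash A B F).mp h).1
  · -- ECA5
    intro A B F h
    rw [hvdash] at h ⊢
    exact ⟨fun x hx => h.1 ⟨hx.2, hx.1⟩, fun s hB hA => h.2 s hA hB⟩
end

section
/- Let (R,0,*,∪,⊢_R) be a finite extended contact algebra. Then there exists a nonempty set W, equivalence relations R₁ and R₂ on W, and an injective map h : R → 𝒫(W) such that: h(0) = ∅; h(a*) = W \ h(a); h(a ∪ b) = h(a) ∪ h(b); for all a,b,d ∈ R, (a,b) ⊢_R d iff (h(a) ∩ h(b) ⊆ h(d) and for all s ∈ W, if R₁(R₂(s)) intersects both h(a) and h(b) then R₁(R₂(s)) intersects h(d)), where R₁(R₂(s)) is the union of the R₁-classes of all t in the R₂-class of s; and moreover h preserves internal connectedness: for all a ∈ R, a is internally connected in (R,⊢_R) iff h(a) is internally connected in the powerset extended contact algebra of (W,R₁,R₂). -/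
universe u

/-- The covering relation of the powerset extended contact algebra of an equivalence
frame `(W, R₁, R₂)` of type 2: `(A,B) ⊢_W D` iff `A ∩ B ⊆ D` and for all `s`,
if `R₁(R₂(s))` meets both `A` and `B` then it meets `D`. -/
def frameVdash {W : Type*} (R₁ R₂ : W → W → Prop) (A B D : Set W) : Prop :=
  A ∩ B ⊆ D ∧ ∀ s : W,
    ({x : W | ∃ t : W, R₂ s t ∧ R₁ t x} ∩ A).Nonempty →
    ({x : W | ∃ t : W, R₂ s t ∧ R₁ t x} ∩ B).Nonempty →
    ({x : W | ∃ t : W, R₂ s t ∧ R₁ t x} ∩ D).Nonempty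

namespace ECAAux

variable {R : Type u} [BooleanAlgebra R]

lemma exists_atom_le [Finite R] {b : R} (hb : b ≠ ⊥) : ∃ x : R, IsAtom x ∧ x ≤ b :=
  (IsAtomic.eq_bot_or_exists_atom_le b).resolve_left hb

lemma atom_le_or {x : R} (hx : IsAtom x) (a : R) : x ⊓ a = ⊥ ∨ x ≤ a := by
  rcases hx.le_iff.mp (inf_le_left : x ⊓ a ≤ x) with h | h
  · exact Or.inl h
  · exact Or.inr ((le_of_eq h.symm).trans inf_le_right)

lemma atom_le_sup {x a b : R} (hx : IsAtom x) (h : x ≤ a ⊔ b) : x ≤ a ∨ x ≤ b := by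
  rcases atom_le_or hx a with h1 | h1
  · rcases atom_le_or hx b with h2 | h2
    · exfalso
      apply hx.1
      have hxx : x = x ⊓ (a ⊔ b) := (inf_eq_left.mpr h).symm
      rw [inf_sup_left, h1, h2, sup_idem] at hxx
      exact hxx
    · exact Or.inr h2
  · exact Or.inl h1

lemma atom_le_compl {x a : R} (hx : IsAtom x) : x ≤ aᶜ ↔ ¬ x ≤ a := by
  constructor
  · intro h1 h2
    have : x ≤ a ⊓ aᶜ := le_inf h2 h1
    rw [inf_compl_eq_bot, le_bot_iff] at this
    exact hx.1 this
  · intro h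
    rcases atom_le_or hx a with h1 | h1
    · exact le_compl_iff_disjoint_right.mpr (disjoint_iff.mpr h1)
    · exact absurd h1 h

lemma atom_le_finsetSup {s : Finset R} {f : R → R} {z : R} (hz : IsAtom z)
    (h : z ≤ s.sup f) : ∃ x ∈ s, z ≤ f x := by
  classical
  induction s using Finset.induction_on with
  | empty =>
    rw [Finset.sup_empty, le_bot_iff] at h
    exact absurd h hz.1
  | insert _ _ hxs ih =>
    rw [Finset.sup_insert] at h
    rcases atom_le_sup hz h with h1 | h1
    · exact ⟨_, Finset.mem_insert_self _ _, h1⟩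
    · obtain ⟨x, hx, hle⟩ := ih h1
      exact ⟨x, Finset.mem_insert_of_mem hx, hle⟩

section Vdash

variable {vdash : R → R → R → Prop}
variable (E1 : ∀ a b d e f : R, vdash a b f → vdash (a ⊔ d) (b ⊔ e) (d ⊔ e ⊔ f))
variable (E2 : ∀ a b d e f : R, vdash a b d → vdash a b e → vdash d e f → vdash a b f)
variable (E3 : ∀ a b f : R, (a ≤ f ∨ b ≤ f) → vdash a b f)
variable (E4 : ∀ a b f : R, vdash a b f → a ⊓ b ≤ f)
variable (E5 : ∀ a b f : R, vdash a b f → vdash b a f)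

include E2 E3 in
lemma mono3 {a b f f' : R} (h : vdash a b f) (hf : f ≤ f') : vdash a b f' :=
  E2 a b f f f' h h (E3 f f f' (Or.inl hf))

include E2 E3 in
lemma anti12 {a b p q f : R} (hp : p ≤ a) (hq : q ≤ b) (h : vdash a b f) : vdash p q f :=
  E2 p q a b f (E3 p q a (Or.inl hp)) (E3 p q b (Or.inr hq)) h

include E1 E2 E3 in
lemma addL {p r q d : R} (h1 : vdash p q d) (h2 : vdash r q d) : vdash (p ⊔ r) q d := by
  have e1 : vdash (p ⊔ r) (q ⊔ ⊥) (r ⊔ ⊥ ⊔ d) := E1 p q r ⊥ d h1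
  have e3 : vdash (r ⊔ d) (q ⊔ ⊥) (d ⊔ ⊥ ⊔ d) := E1 r q d ⊥ d h2
  simp only [sup_bot_eq, sup_idem] at e1 e3
  exact E2 (p ⊔ r) q (r ⊔ d) q d e1 (E3 _ _ _ (Or.inr le_rfl)) e3

include E1 E2 E3 in
lemma supL {s : Finset R} {q d : R} (h : ∀ x ∈ s, vdash x q d) : vdash (s.sup id) q d :=
  Finset.sup_induction (p := fun z => vdash z q d) (E3 _ _ _ (Or.inl bot_le))
    (fun a1 h1 a2 h2 => addL E1 E2 E3 h1 h2) h

include E1 E2 E3 in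
lemma vdash_of_atoms [Finite R] {p q d : R}
    (h : ∀ x, IsAtom x → x ≤ p → vdash x q d) : vdash p q d := by
  classical
  have := Fintype.ofFinite R
  set s : Finset R := Finset.univ.filter (fun x => IsAtom x ∧ x ≤ p) with hs
  have hsup : vdash (s.sup id) q d := by
    refine supL E1 E2 E3 (fun x hx => ?_)
    rw [hs, Finset.mem_filter] at hx
    exact h x hx.2.1 hx.2.2
  have hps : p ≤ s.sup id := by
    rw [BooleanAlgebra.le_iff_atom_le_imp]
    intro z hz hzp
    exact Finset.le_sup (f := id) (by rw [hs, Finset.mem_filter]; exact ⟨Finset.mem_univ z, hz, hzp⟩)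
  exact anti12 E2 E3 hps le_rfl hsup

/-- A cluster: a nonzero element closed under the covering relation. -/
def IsCl (vdash : R → R → R → Prop) (c : R) : Prop :=
  c ≠ ⊥ ∧ ∀ p q r : R, vdash p q r → p ⊓ c ≠ ⊥ → q ⊓ c ≠ ⊥ → r ⊓ c ≠ ⊥

include E4 in
lemma atom_isCl {x : R} (hx : IsAtom x) : IsCl vdash x := by
  refine ⟨hx.1, fun p q r hv hp hq => ?_⟩
  have hxp : x ≤ p := (atom_le_or hx p).resolve_left (fun hh => hp (by rw [inf_comm]; exact hh))
  have hxq : x ≤ q := (atom_le_or hx q).resolve_left (fun hh => hq (by rw [inf_comm]; exact hh))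
  have hxr : x ≤ r := le_trans (le_inf hxp hxq) (E4 p q r hv)
  rw [inf_eq_right.mpr hxr]
  exact hx.1

include E1 E2 E3 E5 in
lemma exists_cluster [Finite R] {a b d : R} (hnv : ¬ vdash a b d) :
    ∃ c : R, IsCl vdash c ∧ a ⊓ c ≠ ⊥ ∧ b ⊓ c ≠ ⊥ ∧ d ⊓ c = ⊥ := by
  classical
  -- Step 1: the restricted pair is still not covered
  have h0 : ¬ vdash (a ⊓ dᶜ) (b ⊓ dᶜ) d := by
    intro hv
    apply hnv
    have ha1 : vdash ((a ⊓ dᶜ) ⊔ (a ⊓ d)) (b ⊓ dᶜ) d :=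
      addL E1 E2 E3 hv (E3 _ _ _ (Or.inl inf_le_right))
    rw [← inf_sup_left, compl_sup_eq_top, inf_top_eq] at ha1
    have hb1 : vdash ((b ⊓ dᶜ) ⊔ (b ⊓ d)) a d :=
      addL E1 E2 E3 (E5 _ _ _ ha1) (E3 _ _ _ (Or.inl inf_le_right))
    rw [← inf_sup_left, compl_sup_eq_top, inf_top_eq] at hb1
    exact E5 _ _ _ hb1
  -- Step 2: choose atoms x ≤ a ⊓ dᶜ, y ≤ b ⊓ dᶜ with ¬ vdash x y d
  have hxex : ∃ x, IsAtom x ∧ x ≤ a ⊓ dᶜ ∧ ¬ vdash x (b ⊓ dᶜ) d := by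
    by_contra hc
    push_neg at hc
    exact h0 (vdash_of_atoms E1 E2 E3 (fun x hx hxle => hc x hx hxle))
  obtain ⟨x, hxat, hxle, hx1⟩ := hxex
  have hyex : ∃ y, IsAtom y ∧ y ≤ b ⊓ dᶜ ∧ ¬ vdash x y d := by
    by_contra hc
    push_neg at hc
    exact hx1 (E5 _ _ _ (vdash_of_atoms E1 E2 E3 (fun y hy hyle => E5 _ _ _ (hc y hy hyle))))
  obtain ⟨y, hyat, hyle, hxy⟩ := hyex
  -- Step 3: a maximal extension d' of d with ¬ vdash x y d'
  obtain ⟨d', hd'mem, hd'max⟩ :=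
    Set.Finite.exists_maximalFor id {e : R | d ≤ e ∧ ¬ vdash x y e} (Set.toFinite _)
      ⟨d, le_rfl, hxy⟩
  have hdd' : d ≤ d' := hd'mem.1
  have hnd' : ¬ vdash x y d' := hd'mem.2
  have hmax : ∀ e : R, d ≤ e → d' ≤ e → d' ≠ e → vdash x y e := by
    intro e h1 h2 h3
    by_contra hv
    exact h3 (le_antisymm h2 (hd'max ⟨h1, hv⟩ h2))
  set c := d'ᶜ with hc
  have hxd' : ¬ x ≤ d' := fun hh => hnd' (E3 x y d' (Or.inl hh))
  have hyd' : ¬ y ≤ d' := fun hh => hnd' (E3 x y d' (Or.inr hh))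
  have hxc : x ≤ c := (atom_le_compl hxat).mpr hxd'
  have hyc : y ≤ c := (atom_le_compl hyat).mpr hyd'
  refine ⟨c, ⟨?_, ?_⟩, ?_, ?_, ?_⟩
  · intro hcbot
    exact hxat.1 (le_bot_iff.mp (hcbot ▸ hxc))
  · intro p q r hv hp hq
    by_contra hr
    have hrd' : r ≤ d' := by
      have h1 : r ≤ cᶜ := le_compl_iff_disjoint_right.mpr (disjoint_iff.mpr hr)
      rwa [hc, compl_compl] at h1
    have hpq' : vdash (p ⊓ c) (q ⊓ c) d' :=
      anti12 E2 E3 inf_le_left inf_le_left (mono3 E2 E3 hv hrd')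
    have hpcb : p ⊓ c ≠ ⊥ := hp
    have hqcb : q ⊓ c ≠ ⊥ := hq
    have h1 : vdash x y (d' ⊔ p ⊓ c) := by
      refine hmax _ (hdd'.trans le_sup_left) le_sup_left (fun heq => hpcb ?_)
      have hle : p ⊓ c ≤ d' := le_sup_right.trans heq.symm.le
      have : p ⊓ c ≤ d' ⊓ d'ᶜ := le_inf hle inf_le_right
      rwa [inf_compl_eq_bot, le_bot_iff] at this
    have h2 : vdash x y (d' ⊔ q ⊓ c) := by
      refine hmax _ (hdd'.trans le_sup_left) le_sup_left (fun heq => hqcb ?_)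
      have hle : q ⊓ c ≤ d' := le_sup_right.trans heq.symm.le
      have : q ⊓ c ≤ d' ⊓ d'ᶜ := le_inf hle inf_le_right
      rwa [inf_compl_eq_bot, le_bot_iff] at this
    have h3 : vdash (d' ⊔ p ⊓ c) (d' ⊔ q ⊓ c) d' := by
      have := E1 (p ⊓ c) (q ⊓ c) d' d' d' hpq'
      simp only [sup_idem] at this
      rw [sup_comm (p ⊓ c) d', sup_comm (q ⊓ c) d'] at this
      exact this
    exact hnd' (E2 x y _ _ d' h1 h2 h3)
  · intro hab
    exact hxat.1 (le_bot_iff.mp (hab ▸ le_inf (hxle.trans inf_le_left) hxc))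
  · intro hab
    exact hyat.1 (le_bot_iff.mp (hab ▸ le_inf (hyle.trans inf_le_left) hyc))
  · have : d ⊓ c ≤ d' ⊓ d'ᶜ := inf_le_inf hdd' le_rfl
    rw [inf_compl_eq_bot, le_bot_iff] at this
    exact this

end Vdash

end ECAAux

/-- Every finite extended contact algebra embeds in the powerset
extended contact algebra of an equivalence frame of type 2, preserving the relation
of internal connectedness. -/
theorem finite_eca_type2_representation {R : Type u} [BooleanAlgebra R] [Nontrivial R]
    [Finite R]
    (vdash : R → R → R → Prop)
    (ECA1 : ∀ a b d e f : R, vdash a b f → vdash (a ⊔ d) (b ⊔ e) (d ⊔ e ⊔ f))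
    (ECA2 : ∀ a b d e f : R, vdash a b d → vdash a b e → vdash d e f → vdash a b f)
    (ECA3 : ∀ a b f : R, (a ≤ f ∨ b ≤ f) → vdash a b f)
    (ECA4 : ∀ a b f : R, vdash a b f → a ⊓ b ≤ f)
    (ECA5 : ∀ a b f : R, vdash a b f → vdash b a f) :
    ∃ (W : Type u) (_ : Nonempty W) (R₁ R₂ : W → W → Prop)
      (_ : Equivalence R₁) (_ : Equivalence R₂) (h : R → Set W),
      Function.Injective h ∧
      h ⊥ = ∅ ∧
      (∀ a : R, h aᶜ = (h a)ᶜ) ∧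
      (∀ a b : R, h (a ⊔ b) = h a ∪ h b) ∧
      (∀ a b d : R, vdash a b d ↔ frameVdash R₁ R₂ (h a) (h b) (h d)) ∧
      (∀ a : R,
        (∀ b d : R, b ≠ ⊥ → d ≠ ⊥ → a = b ⊔ d → ¬ vdash b d aᶜ) ↔
        (∀ B D : Set W, B ≠ ∅ → D ≠ ∅ → h a = B ∪ D →
          ¬ frameVdash R₁ R₂ B D (h a)ᶜ)) := by
  classical
  -- The frame: points are pairs (atom, cluster) with the atom inside the cluster.
  let W : Type u := {w : R × R // IsAtom w.1 ∧ ECAAux.IsCl vdash w.2 ∧ w.1 ≤ w.2}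
  let R1 : W → W → Prop := fun s t => s.val.1 = t.val.1
  let R2 : W → W → Prop := fun s t => s.val.2 = t.val.2
  let h : R → Set W := fun a => {w : W | w.val.1 ≤ a}
  -- the point determined by a single atom
  have hpt : ∀ z : R, IsAtom z → (IsAtom ((z, z) : R × R).1 ∧
      ECAAux.IsCl vdash ((z, z) : R × R).2 ∧ ((z, z) : R × R).1 ≤ ((z, z) : R × R).2) :=
    fun z hz => ⟨hz, ECAAux.atom_isCl ECA4 hz, le_rfl⟩
  obtain ⟨x0, hx0⟩ : ∃ x : R, IsAtom x := by
    obtain ⟨x, hx, -⟩ := ECAAux.exists_atom_le (show (⊤ : R) ≠ ⊥ from top_ne_bot)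
    exact ⟨x, hx⟩
  have hWne : Nonempty W := ⟨⟨(x0, x0), hpt x0 hx0⟩⟩
  -- membership in the neighbourhood of a point
  have hmem : ∀ (s : W) (a : R),
      ({x : W | ∃ t : W, R2 s t ∧ R1 t x} ∩ h a).Nonempty ↔ s.val.2 ⊓ a ≠ ⊥ := by
    intro s a
    constructor
    · rintro ⟨w, ⟨t, ht2, ht1⟩, hw⟩
      have hw' : w.val.1 ≤ a := hw
      have h1 : t.val.1 ≤ s.val.2 ⊓ a := by
        refine le_inf ?_ ?_
        · have := t.property.2.2
          rw [← ht2] at this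
          exact this
        · rw [ht1]; exact hw'
      intro hbot
      exact t.property.1.1 (le_bot_iff.mp (hbot ▸ h1))
    · intro hne
      obtain ⟨z, hz, hzle⟩ := ECAAux.exists_atom_le hne
      refine ⟨⟨(z, z), hpt z hz⟩,
        ⟨⟨(z, s.val.2), hz, s.property.2.1, hzle.trans inf_le_left⟩, rfl, rfl⟩,
        hzle.trans inf_le_right⟩
  -- the key correspondence
  have hcorr : ∀ a b d : R, vdash a b d ↔ frameVdash R1 R2 (h a) (h b) (h d) := by
    intro a b d
    constructor
    · intro hv
      constructor
      · rintro w ⟨hwa, hwb⟩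
        exact le_trans (le_inf hwa hwb) (ECA4 a b d hv)
      · intro s hA hB
        rw [hmem] at hA hB ⊢
        have := s.property.2.1.2 a b d hv (by rwa [inf_comm] at hA) (by rwa [inf_comm] at hB)
        rwa [inf_comm] at this
    · intro hf
      by_contra hnv
      obtain ⟨c, hc, hac, hbc, hdc⟩ := ECAAux.exists_cluster ECA1 ECA2 ECA3 ECA5 hnv
      obtain ⟨z, hz, hzle⟩ := ECAAux.exists_atom_le hac
      have hs : IsAtom ((z, c) : R × R).1 ∧ ECAAux.IsCl vdash ((z, c) : R × R).2 ∧
          ((z, c) : R × R).1 ≤ ((z, c) : R × R).2 := ⟨hz, hc, hzle.trans inf_le_right⟩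
      set s : W := ⟨(z, c), hs⟩ with hsdef
      have hA := (hmem s a).mpr (by rw [inf_comm]; exact hac)
      have hB := (hmem s b).mpr (by rw [inf_comm]; exact hbc)
      have hD := hf.2 s hA hB
      rw [hmem] at hD
      exact hD (by rw [inf_comm]; exact hdc)
  -- basic properties of h
  have hbot : h ⊥ = ∅ := by
    ext w
    simp only [Set.mem_empty_iff_false, iff_false]
    intro hw
    exact w.property.1.1 (le_bot_iff.mp hw)
  have hcompl : ∀ a : R, h aᶜ = (h a)ᶜ := by
    intro a
    ext w
    simp only [Set.mem_compl_iff]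
    exact ECAAux.atom_le_compl w.property.1
  have hsupmap : ∀ a b : R, h (a ⊔ b) = h a ∪ h b := by
    intro a b
    ext w
    constructor
    · intro hw
      rcases ECAAux.atom_le_sup w.property.1 hw with h1 | h1
      · exact Or.inl h1
      · exact Or.inr h1
    · intro hw
      rcases hw with h1 | h1
      · exact le_trans h1 le_sup_left
      · exact le_trans h1 le_sup_right
  have hmono : ∀ a b : R, h a ⊆ h b → a ≤ b := by
    intro a b hab
    rw [BooleanAlgebra.le_iff_atom_le_imp]
    intro z hz hza
    exact hab (show (⟨(z, z), hpt z hz⟩ : W) ∈ h a from hza)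
  have hinj : Function.Injective h := by
    intro a b hab
    exact le_antisymm (hmono a b (hab ▸ subset_rfl)) (hmono b a (hab ▸ subset_rfl))
  -- internal connectedness
  have hIC : ∀ a : R,
      (∀ b d : R, b ≠ ⊥ → d ≠ ⊥ → a = b ⊔ d → ¬ vdash b d aᶜ) ↔
      (∀ B D : Set W, B ≠ ∅ → D ≠ ∅ → h a = B ∪ D →
        ¬ frameVdash R1 R2 B D (h a)ᶜ) := by
    intro a
    constructor
    · intro hic B D hB hD hBD hfr
      have hBa : B ⊆ h a := hBD ▸ Set.subset_union_left
      have hDa : D ⊆ h a := hBD ▸ Set.subset_union_right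
      -- no atom labels points of both B and D
      have hsep : ∀ w₁ ∈ B, ∀ w₂ ∈ D, (w₁ : W).val.1 ≠ (w₂ : W).val.1 := by
        intro w₁ hw₁ w₂ hw₂ heq
        set z := w₁.val.1 with hz
        set s : W := ⟨(z, z), hpt z w₁.property.1⟩ with hsdef
        have hA : ({x : W | ∃ t : W, R2 s t ∧ R1 t x} ∩ B).Nonempty :=
          ⟨w₁, ⟨s, rfl, rfl⟩, hw₁⟩
        have hBn : ({x : W | ∃ t : W, R2 s t ∧ R1 t x} ∩ D).Nonempty :=
          ⟨w₂, ⟨s, rfl, heq⟩, hw₂⟩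
        obtain ⟨w, ⟨t, ht2, ht1⟩, hw⟩ := hfr.2 s hA hBn
        have ht1z : t.val.1 ≤ z := by
          have := t.property.2.2
          rw [← ht2] at this
          exact this
        have hwa : w.val.1 ≤ a := by
          rw [← ht1]
          exact ht1z.trans (hBa hw₁)
        exact hw hwa
      have := Fintype.ofFinite R
      set SB : Finset R := Finset.univ.filter (fun x => ∃ w ∈ B, (w : W).val.1 = x) with hSB
      set SD : Finset R := Finset.univ.filter (fun x => ∃ w ∈ D, (w : W).val.1 = x) with hSD
      set bb : R := SB.sup id with hbbdef
      set dd : R := SD.sup id with hdddef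
      obtain ⟨wB, hwB⟩ := Set.nonempty_iff_ne_empty.mpr hB
      obtain ⟨wD, hwD⟩ := Set.nonempty_iff_ne_empty.mpr hD
      have hwBbb : wB.val.1 ≤ bb :=
        Finset.le_sup (f := id) (by rw [hSB, Finset.mem_filter]; exact ⟨Finset.mem_univ _, wB, hwB, rfl⟩)
      have hwDdd : wD.val.1 ≤ dd :=
        Finset.le_sup (f := id) (by rw [hSD, Finset.mem_filter]; exact ⟨Finset.mem_univ _, wD, hwD, rfl⟩)
      have hbbne : bb ≠ ⊥ := fun hh => wB.property.1.1 (le_bot_iff.mp (hh ▸ hwBbb))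
      have hddne : dd ≠ ⊥ := fun hh => wD.property.1.1 (le_bot_iff.mp (hh ▸ hwDdd))
      have hbba : bb ≤ a := by
        refine Finset.sup_le ?_
        intro x hx
        rw [hSB, Finset.mem_filter] at hx
        obtain ⟨-, w, hw, rfl⟩ := hx
        exact hBa hw
      have hdda : dd ≤ a := by
        refine Finset.sup_le ?_
        intro x hx
        rw [hSD, Finset.mem_filter] at hx
        obtain ⟨-, w, hw, rfl⟩ := hx
        exact hDa hw
      have hcov : a ≤ bb ⊔ dd := by
        rw [BooleanAlgebra.le_iff_atom_le_imp]
        intro z hz hza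
        have hzw : (⟨(z, z), hpt z hz⟩ : W) ∈ h a := hza
        rw [hBD] at hzw
        rcases hzw with hh | hh
        · refine le_trans ?_ (le_sup_left : bb ≤ bb ⊔ dd)
          exact Finset.le_sup (f := id)
            (by rw [hSB, Finset.mem_filter]; exact ⟨Finset.mem_univ _, _, hh, rfl⟩)
        · refine le_trans ?_ (le_sup_right : dd ≤ bb ⊔ dd)
          exact Finset.le_sup (f := id)
            (by rw [hSD, Finset.mem_filter]; exact ⟨Finset.mem_univ _, _, hh, rfl⟩)
      have habd : a = bb ⊔ dd := le_antisymm hcov (sup_le hbba hdda)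
      -- B = h bb and D = h dd
      have hBeq : B = h bb := by
        ext w
        constructor
        · intro hw
          exact Finset.le_sup (f := id)
            (by rw [hSB, Finset.mem_filter]; exact ⟨Finset.mem_univ _, w, hw, rfl⟩)
        · intro hw
          have hw' : w.val.1 ≤ bb := hw
          obtain ⟨x, hxSB, hle⟩ := ECAAux.atom_le_finsetSup w.property.1 hw'
          rw [hSB, Finset.mem_filter] at hxSB
          obtain ⟨-, w', hw'B, rfl⟩ := hxSB
          have heq : w.val.1 = w'.val.1 :=
            (w'.property.1.le_iff_eq w.property.1.1).mp hle
          have hwa : w ∈ h a := show w.val.1 ≤ a by rw [heq]; exact hBa hw'B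
          rw [hBD] at hwa
          rcases hwa with hh | hh
          · exact hh
          · exact absurd heq.symm (hsep w' hw'B w hh)
      have hDeq : D = h dd := by
        ext w
        constructor
        · intro hw
          exact Finset.le_sup (f := id)
            (by rw [hSD, Finset.mem_filter]; exact ⟨Finset.mem_univ _, w, hw, rfl⟩)
        · intro hw
          have hw' : w.val.1 ≤ dd := hw
          obtain ⟨x, hxSD, hle⟩ := ECAAux.atom_le_finsetSup w.property.1 hw'
          rw [hSD, Finset.mem_filter] at hxSD
          obtain ⟨-, w', hw'D, rfl⟩ := hxSD
          have heq : w.val.1 = w'.val.1 :=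
            (w'.property.1.le_iff_eq w.property.1.1).mp hle
          have hwa : w ∈ h a := show w.val.1 ≤ a by rw [heq]; exact hDa hw'D
          rw [hBD] at hwa
          rcases hwa with hh | hh
          · exact absurd heq (hsep w hh w' hw'D)
          · exact hh
      rw [hBeq, hDeq, ← hcompl] at hfr
      exact hic bb dd hbbne hddne habd ((hcorr bb dd aᶜ).mpr hfr)
    · intro hic b d hb hd habd hv
      obtain ⟨zb, hzb, hzbl⟩ := ECAAux.exists_atom_le hb
      obtain ⟨zd, hzd, hzdl⟩ := ECAAux.exists_atom_le hd
      refine hic (h b) (h d) ?_ ?_ ?_ ?_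
      · exact Set.nonempty_iff_ne_empty.mp ⟨⟨(zb, zb), hpt zb hzb⟩, hzbl⟩
      · exact Set.nonempty_iff_ne_empty.mp ⟨⟨(zd, zd), hpt zd hzd⟩, hzdl⟩
      · rw [habd]; exact hsupmap b d
      · rw [← hcompl]
        exact (hcorr b d aᶜ).mp hv
  exact ⟨W, hWne, R1, R2,
    ⟨fun _ => rfl, fun hh => hh.symm, fun h1 h2 => h1.trans h2⟩,
    ⟨fun _ => rfl, fun hh => hh.symm, fun h1 h2 => h1.trans h2⟩,
    h, hinj, hbot, hcompl, hsupmap, hcorr, hIC⟩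
end

section
/- Let (R,0,*,∪,C_R) be a contact algebra. Then there exists a topological space X and an injective map h : R → 𝒫(X) whose values are regular closed subsets of X, such that h(0) = ∅, h(a*) = Cl(X \ h(a)), h(a ∪ b) = h(a) ∪ h(b), and for all a,b ∈ R: C_R(a,b) iff h(a) ∩ h(b) ≠ ∅. Moreover, if R is finite then X can be chosen finite and h surjective onto the set of regular closed subsets of X. -/
universe u

open TopologicalSpace Set

/-- A clan in a contact algebra: a grill all of whose elements are pairwise in contact. -/
def CAuxIsClan {R : Type u} [BooleanAlgebra R] (C : R → R → Prop) (Γ : Set R) : Prop :=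
  ⊤ ∈ Γ ∧ ⊥ ∉ Γ ∧ (∀ a b : R, a ∈ Γ → a ≤ b → b ∈ Γ) ∧
    (∀ a b : R, a ⊔ b ∈ Γ → a ∈ Γ ∨ b ∈ Γ) ∧ (∀ a b : R, a ∈ Γ → b ∈ Γ → C a b)

/-- Zorn-style construction of "ultrafilters relative to a predicate `P`". -/
lemma CAuxUltra {R : Type u} [BooleanAlgebra R] (P : R → Prop)
    (mono : ∀ u v : R, P u → u ≤ v → P v)
    (split : ∀ u c : R, P u → P (u ⊓ c) ∨ P (u ⊓ cᶜ))
    {a : R} (ha : P a) :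
    ∃ U : Set R, a ∈ U ∧ (∀ u ∈ U, P u) ∧ (∀ u v : R, u ∈ U → u ≤ v → v ∈ U) ∧
      (∀ u v : R, u ∈ U → v ∈ U → u ⊓ v ∈ U) ∧ (∀ c : R, c ∈ U ∨ cᶜ ∈ U) := by
  classical
  set S : Set (Set R) := {F | a ∈ F ∧ (∀ u ∈ F, P u) ∧
    (∀ u v : R, u ∈ F → u ≤ v → v ∈ F) ∧ (∀ u v : R, u ∈ F → v ∈ F → u ⊓ v ∈ F)} with hS
  have hx : {u : R | a ≤ u} ∈ S := by
    refine ⟨le_refl a, fun u hu => mono a u ha hu, fun u v hu huv => le_trans hu huv,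
      fun u v hu hv => le_inf hu hv⟩
  have hchainub : ∀ c ⊆ S, IsChain (· ⊆ ·) c → c.Nonempty → ∃ ub ∈ S, ∀ s ∈ c, s ⊆ ub := by
    intro c hcS hchain hcne
    obtain ⟨F₀, hF₀⟩ := hcne
    refine ⟨⋃₀ c, ⟨⟨F₀, hF₀, (hcS hF₀).1⟩, ?_, ?_, ?_⟩, fun s hs => subset_sUnion_of_mem hs⟩
    · rintro u ⟨F, hF, huF⟩
      exact (hcS hF).2.1 u huF
    · rintro u v ⟨F, hF, huF⟩ huv
      exact ⟨F, hF, (hcS hF).2.2.1 u v huF huv⟩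
    · rintro u v ⟨F, hF, huF⟩ ⟨G, hG, hvG⟩
      rcases hchain.total hF hG with h | h
      · exact ⟨G, hG, (hcS hG).2.2.2 u v (h huF) hvG⟩
      · exact ⟨F, hF, (hcS hF).2.2.2 u v huF (h hvG)⟩
  obtain ⟨U, -, hUmax⟩ := zorn_subset_nonempty S hchainub _ hx
  obtain ⟨haU, hP, hup, hinf⟩ := hUmax.prop
  refine ⟨U, haU, hP, hup, hinf, ?_⟩
  intro c
  by_contra hc
  push_neg at hc
  obtain ⟨hc1, hc2⟩ := hc
  have key : ∀ d : R, d ∉ U → ∃ u ∈ U, ¬ P (u ⊓ d) := by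
    intro d hd
    by_contra hall
    push_neg at hall
    set F' : Set R := {x | ∃ u ∈ U, u ⊓ d ≤ x} with hF'
    have hF'S : F' ∈ S := by
      refine ⟨⟨a, haU, inf_le_left⟩, ?_, ?_, ?_⟩
      · rintro x ⟨u, hu, hux⟩
        exact mono _ _ (hall u hu) hux
      · rintro x y ⟨u, hu, hux⟩ hxy
        exact ⟨u, hu, le_trans hux hxy⟩
      · rintro x y ⟨u, hu, hux⟩ ⟨v, hv, hvy⟩
        exact ⟨u ⊓ v, hinf u v hu hv, by
          refine le_inf (le_trans ?_ hux) (le_trans ?_ hvy)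
          · exact inf_le_inf_right d inf_le_left
          · exact inf_le_inf_right d inf_le_right⟩
    have hsub : U ⊆ F' := fun u hu => ⟨u, hu, inf_le_left⟩
    have : F' = U := hUmax.eq_of_superset hF'S hsub
    exact hd (this ▸ ⟨a, haU, inf_le_right⟩)
  obtain ⟨u₁, hu₁, hP1⟩ := key c hc1
  obtain ⟨u₂, hu₂, hP2⟩ := key cᶜ hc2
  have hu : u₁ ⊓ u₂ ∈ U := hinf _ _ hu₁ hu₂
  rcases split (u₁ ⊓ u₂) c (hP _ hu) with h | h
  · exact hP1 (mono _ _ h (inf_le_inf_right c inf_le_left))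
  · exact hP2 (mono _ _ h (inf_le_inf_right cᶜ inf_le_right))

/-- In a filter-like set that decides every element, joins are prime. -/
lemma CAuxPrime {R : Type u} [BooleanAlgebra R] {U : Set R}
    (hup : ∀ u v : R, u ∈ U → u ≤ v → v ∈ U)
    (hinf : ∀ u v : R, u ∈ U → v ∈ U → u ⊓ v ∈ U)
    (hbot : ⊥ ∉ U) (hult : ∀ c : R, c ∈ U ∨ cᶜ ∈ U)
    {x y : R} (hxy : x ⊔ y ∈ U) : x ∈ U ∨ y ∈ U := by
  rcases hult x with hx | hx
  · exact Or.inl hx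
  · right
    have hle : (x ⊔ y) ⊓ xᶜ ≤ y := by
      rw [inf_sup_right, inf_compl_eq_bot, bot_sup_eq]
      exact inf_le_left
    exact hup _ _ (hinf _ _ hxy hx) hle

/-- Every nonzero element lies in an "ultrafilter" clan avoiding everything disjoint from it. -/
lemma CAuxUltraClan {R : Type u} [BooleanAlgebra R] (C : R → R → Prop)
    (CC : ∀ u v : R, u ⊓ v ≠ ⊥ → C u v) {a : R} (ha : a ≠ ⊥) :
    ∃ Γ : Set R, CAuxIsClan C Γ ∧ a ∈ Γ ∧ ∀ b : R, a ≤ bᶜ → b ∉ Γ := by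
  have mono : ∀ u v : R, u ≠ ⊥ → u ≤ v → v ≠ ⊥ := by
    intro u v hu huv hv
    exact hu (le_bot_iff.mp (hv ▸ huv))
  have split : ∀ u c : R, u ≠ ⊥ → (u ⊓ c ≠ ⊥) ∨ (u ⊓ cᶜ ≠ ⊥) := by
    intro u c hu
    by_contra hcon
    push_neg at hcon
    apply hu
    have : u ⊓ c ⊔ u ⊓ cᶜ = u := by
      rw [← inf_sup_left, sup_compl_eq_top, inf_top_eq]
    rw [← this, hcon.1, hcon.2, sup_idem]
  obtain ⟨U, haU, hP, hup, hinf, hult⟩ := CAuxUltra (fun u => u ≠ ⊥) mono split ha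
  have hbot : ⊥ ∉ U := fun h => hP ⊥ h rfl
  refine ⟨U, ⟨hup _ _ haU le_top, hbot, hup,
    fun x y hxy => CAuxPrime hup hinf hbot hult hxy,
    fun u v hu hv => CC u v (hP _ (hinf _ _ hu hv))⟩, haU, ?_⟩
  intro b hb hbU
  have : bᶜ ∈ U := hup _ _ haU hb
  exact hbot (by simpa [inf_compl_eq_bot] using hinf _ _ hbU this)

/-- If `C a b`, then `a` and `b` lie in a common clan. -/
lemma CAuxClanPair {R : Type u} [BooleanAlgebra R] (C : R → R → Prop)
    (CA1 : ∀ a b d e : R, C a b → a ≤ d → b ≤ e → C d e)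
    (CA2 : ∀ a b d e : R, C (a ⊔ d) (b ⊔ e) → C a b ∨ C a e ∨ C d b ∨ C d e)
    (CA3 : ∀ a b : R, C a b → a ≠ ⊥ ∧ b ≠ ⊥)
    (CA5 : ∀ a b : R, C a b → C b a)
    (CC : ∀ u v : R, u ⊓ v ≠ ⊥ → C u v)
    {a b : R} (hab : C a b) :
    ∃ Γ : Set R, CAuxIsClan C Γ ∧ a ∈ Γ ∧ b ∈ Γ := by
  have hsplitC : ∀ u v c : R, C u v → C u (v ⊓ c) ∨ C u (v ⊓ cᶜ) := by
    intro u v c huv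
    have hv : v ⊓ c ⊔ v ⊓ cᶜ = v := by
      rw [← inf_sup_left, sup_compl_eq_top, inf_top_eq]
    have : C (u ⊔ u) (v ⊓ c ⊔ v ⊓ cᶜ) := by rw [sup_idem, hv]; exact huv
    rcases CA2 _ _ _ _ this with h | h | h | h
    · exact Or.inl h
    · exact Or.inr h
    · exact Or.inl h
    · exact Or.inr h
  -- step 1: ultrafilter U containing a, all of whose elements touch b
  obtain ⟨U, haU, hPU, hupU, hinfU, hultU⟩ :=
    CAuxUltra (fun u => C u b)
      (fun u v hu huv => CA1 _ _ _ _ hu huv le_rfl)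
      (fun u c hu => by
        rcases hsplitC b u c (CA5 _ _ hu) with h | h
        · exact Or.inl (CA5 _ _ h)
        · exact Or.inr (CA5 _ _ h)) hab
  have hbotU : ⊥ ∉ U := fun h => (CA3 _ _ (hPU _ h)).1 rfl
  -- step 2: ultrafilter V containing b all of whose elements touch all of U
  obtain ⟨V, hbV, hPV, hupV, hinfV, hultV⟩ :=
    CAuxUltra (fun v => ∀ u ∈ U, C u v)
      (fun v w hv hvw u hu => CA1 _ _ _ _ (hv u hu) le_rfl hvw)
      (fun v c hv => by
        by_contra hcon
        push_neg at hcon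
        obtain ⟨⟨u₁, hu₁, h1⟩, ⟨u₂, hu₂, h2⟩⟩ := hcon
        have hu : u₁ ⊓ u₂ ∈ U := hinfU _ _ hu₁ hu₂
        rcases hsplitC (u₁ ⊓ u₂) v c (hv _ hu) with h | h
        · exact h1 (CA1 _ _ _ _ h inf_le_left le_rfl)
        · exact h2 (CA1 _ _ _ _ h inf_le_right le_rfl))
      (fun u hu => hPU u hu)
  have htopU : ⊤ ∈ U := hupU _ _ haU le_top
  have hbotV : ⊥ ∉ V := fun h => (CA3 _ _ (hPV _ h ⊤ htopU)).2 rfl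
  refine ⟨U ∪ V, ⟨Or.inl htopU, ?_, ?_, ?_, ?_⟩, Or.inl haU, Or.inr hbV⟩
  · rintro (h | h)
    · exact hbotU h
    · exact hbotV h
  · rintro x y (hx | hx) hxy
    · exact Or.inl (hupU _ _ hx hxy)
    · exact Or.inr (hupV _ _ hx hxy)
  · rintro x y (hxy | hxy)
    · rcases CAuxPrime hupU hinfU hbotU hultU hxy with h | h
      · exact Or.inl (Or.inl h)
      · exact Or.inr (Or.inl h)
    · rcases CAuxPrime hupV hinfV hbotV hultV hxy with h | h
      · exact Or.inl (Or.inr h)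
      · exact Or.inr (Or.inr h)
  · rintro x y (hx | hx) (hy | hy)
    · exact CC x y fun h => hbotU (h ▸ hinfU _ _ hx hy)
    · exact hPV y hy x hx
    · exact CA5 _ _ (hPV x hx y hy)
    · exact CC x y fun h => hbotV (h ▸ hinfV _ _ hx hy)

/-- Topological representation of contact algebras: every contact
algebra embeds in the standard contact algebra of regular closed sets of some
topological space; if the algebra is finite, the space can be chosen finite and
the embedding surjective onto the regular closed sets. -/
theorem contact_algebra_topological_representation {R : Type u} [BooleanAlgebra R]
    [Nontrivial R]
    (C : R → R → Prop)
    (CA1 : ∀ a b d e : R, C a b → a ≤ d → b ≤ e → C d e)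
    (CA2 : ∀ a b d e : R, C (a ⊔ d) (b ⊔ e) → C a b ∨ C a e ∨ C d b ∨ C d e)
    (CA3 : ∀ a b : R, C a b → a ≠ ⊥ ∧ b ≠ ⊥)
    (CA4 : ∀ a : R, a ≠ ⊥ → C a a)
    (CA5 : ∀ a b : R, C a b → C b a) :
    ∃ (X : Type u) (_ : TopologicalSpace X) (h : R → Set X),
      (∀ a : R, closure (interior (h a)) = h a) ∧
      Function.Injective h ∧
      h ⊥ = ∅ ∧
      (∀ a : R, h aᶜ = closure ((h a)ᶜ)) ∧
      (∀ a b : R, h (a ⊔ b) = h a ∪ h b) ∧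
      (∀ a b : R, C a b ↔ (h a ∩ h b).Nonempty) ∧
      (Finite R → Finite X ∧
        ∀ A : Set X, closure (interior A) = A → ∃ a : R, h a = A) := by
  classical
  have CC : ∀ u v : R, u ⊓ v ≠ ⊥ → C u v := fun u v h =>
    CA1 _ _ _ _ (CA4 _ h) inf_le_left inf_le_right
  set X := {Γ : Set R // CAuxIsClan C Γ} with hX
  set hs : R → Set X := fun a => {Γ : X | a ∈ Γ.1} with hhs
  letI t : TopologicalSpace X := generateFrom (Set.range fun a : R => (hs a)ᶜ)
  -- basic algebraic properties of hs
  have hbot : hs ⊥ = ∅ := by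
    ext Γ
    simp only [hhs, mem_setOf_eq, mem_empty_iff_false, iff_false]
    exact Γ.2.2.1
  have hsup : ∀ a b : R, hs (a ⊔ b) = hs a ∪ hs b := by
    intro a b
    ext Γ
    constructor
    · intro h
      exact Γ.2.2.2.2.1 a b h
    · rintro (h | h)
      · exact Γ.2.2.2.1 a _ h le_sup_left
      · exact Γ.2.2.2.1 b _ h le_sup_right
  -- basis for the topology
  have basis : IsTopologicalBasis (Set.range fun a : R => (hs a)ᶜ) := by
    refine ⟨?_, ?_, rfl⟩
    · rintro t₁ ⟨a, rfl⟩ t₂ ⟨b, rfl⟩ x hx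
      refine ⟨(hs (a ⊔ b))ᶜ, ⟨a ⊔ b, rfl⟩, ?_, ?_⟩
      · rw [hsup, compl_union]; exact hx
      · rw [hsup, compl_union]
    · apply eq_univ_of_forall
      intro Γ
      exact ⟨(hs ⊥)ᶜ, ⟨⊥, rfl⟩, by rw [hbot]; exact notMem_empty Γ⟩
  -- closure characterization
  have hclosure : ∀ (S : Set X) (Γ : X),
      Γ ∈ closure S ↔ ∀ a : R, S ⊆ hs a → a ∈ Γ.1 := by
    intro S Γ
    rw [basis.mem_closure_iff]
    constructor
    · intro H a hSa
      by_contra haΓ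
      obtain ⟨Δ, hΔ1, hΔ2⟩ := H ((hs a)ᶜ) ⟨a, rfl⟩ haΓ
      exact hΔ1 (hSa hΔ2)
    · rintro H o ⟨a, rfl⟩ hΓo
      by_contra hne
      rw [not_nonempty_iff_eq_empty, ← disjoint_iff_inter_eq_empty] at hne
      have hSa : S ⊆ hs a := by
        intro Δ hΔ
        by_contra hΔa
        exact absurd rfl (hne.ne_of_mem hΔa hΔ)
      exact hΓo (H a hSa)
  -- separation by ultrafilter clans
  have hsep : ∀ c : R, c ≠ ⊥ → ∃ Γ : X, c ∈ Γ.1 ∧ ∀ d : R, c ≤ dᶜ → d ∉ Γ.1 := by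
    intro c hc
    obtain ⟨Γ, hΓ, hcΓ, hex⟩ := CAuxUltraClan C CC hc
    exact ⟨⟨Γ, hΓ⟩, hcΓ, hex⟩
  have hle_iff : ∀ a b : R, hs a ⊆ hs b → a ≤ b := by
    intro a b hab
    by_contra hnle
    have hne : a ⊓ bᶜ ≠ ⊥ := by
      intro h
      exact hnle (by rwa [← sdiff_eq_bot_iff, _root_.sdiff_eq])
    obtain ⟨Γ, hcΓ, hex⟩ := hsep _ hne
    have haΓ : a ∈ Γ.1 := Γ.2.2.2.1 _ _ hcΓ inf_le_left
    exact hex b inf_le_right (hab haΓ)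
  -- the key closure computation
  have hclcompl : ∀ a : R, closure ((hs a)ᶜ) = hs aᶜ := by
    intro a
    ext Γ
    rw [hclosure]
    constructor
    · intro H
      refine H aᶜ ?_
      intro Δ hΔ
      rcases Δ.2.2.2.2.1 a aᶜ (by rw [sup_compl_eq_top]; exact Δ.2.1) with h | h
      · exact absurd h hΔ
      · exact h
    · intro haΓ b hb
      have hab : aᶜ ≤ b := by
        by_contra hnle
        have hne : aᶜ ⊓ bᶜ ≠ ⊥ := by
          intro h
          exact hnle (by rwa [← sdiff_eq_bot_iff, _root_.sdiff_eq])
        obtain ⟨Δ, hcΔ, hex⟩ := hsep _ hne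
        have haΔ : a ∉ Δ.1 := hex a inf_le_left
        exact hex b inf_le_right (hb haΔ)
      exact Γ.2.2.2.1 _ _ haΓ hab
  have hint : ∀ a : R, interior (hs a) = (hs aᶜ)ᶜ := by
    intro a
    rw [← hclcompl a, ← compl_compl (interior (hs a)), ← closure_compl]
  refine ⟨X, t, hs, ?_, ?_, hbot, ?_, hsup, ?_, ?_⟩
  · -- regular closed
    intro a
    rw [hint a, hclcompl aᶜ, compl_compl]
  · -- injective
    intro a b hab
    exact le_antisymm (hle_iff a b (hab ▸ subset_rfl)) (hle_iff b a (hab ▸ subset_rfl))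
  · -- complement
    intro a
    exact (hclcompl a).symm
  · -- contact iff intersection
    intro a b
    constructor
    · intro hab
      obtain ⟨Γ, hΓ, haΓ, hbΓ⟩ := CAuxClanPair C CA1 CA2 CA3 CA5 CC hab
      exact ⟨⟨Γ, hΓ⟩, haΓ, hbΓ⟩
    · rintro ⟨Γ, haΓ, hbΓ⟩
      exact Γ.2.2.2.2.2 a b haΓ hbΓ
  · -- finite case
    intro hfin
    haveI := hfin
    haveI : Finite X := Subtype.finite
    refine ⟨‹Finite X›, ?_⟩
    intro A hA
    -- interior A is a union of basic opens
    set T : Set R := {a | (hs a)ᶜ ⊆ interior A} with hT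
    have hintA : interior A = ⋃ a ∈ T, (hs a)ᶜ := by
      apply subset_antisymm
      · intro x hx
        rw [basis.open_eq_sUnion' isOpen_interior] at hx
        obtain ⟨s, ⟨⟨a, rfl⟩, hsub⟩, hxs⟩ := hx
        exact mem_biUnion hsub hxs
      · exact iUnion₂_subset fun a ha => ha
    have hTfin : T.Finite := Set.toFinite T
    have hfsup : ∀ (s : Finset R) (f : R → R), hs (s.sup f) = ⋃ a ∈ s, hs (f a) := by
      intro s f
      induction s using Finset.induction_on with
      | empty => simp [hbot]
      | insert _ _ hx ih =>
          rw [Finset.sup_insert, hsup, ih]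
          simp [Set.biUnion_insert]
    refine ⟨hTfin.toFinset.sup fun a => aᶜ, ?_⟩
    calc hs (hTfin.toFinset.sup fun a => aᶜ)
        = ⋃ a ∈ hTfin.toFinset, hs aᶜ := hfsup _ _
      _ = ⋃ a ∈ T, hs aᶜ := by
          apply iUnion_congr
          intro a
          simp [hTfin.mem_toFinset]
      _ = ⋃ a ∈ T, closure ((hs a)ᶜ) := by
          apply iUnion_congr
          intro a
          simp [hclcompl]
      _ = closure (⋃ a ∈ T, (hs a)ᶜ) := (hTfin.closure_biUnion _).symm
      _ = closure (interior A) := by rw [hintA]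
      _ = A := hA
end

section
/- Let (R,0,*,∪,C_R) be a contact algebra. Then there exists a nonempty set W, a reflexive and symmetric binary relation S on W, and an injective map h : R → 𝒫(W) such that h(0) = ∅, h(a*) = W \ h(a), h(a ∪ b) = h(a) ∪ h(b), and for all a,b ∈ R: C_R(a,b) iff there exist s ∈ h(a) and t ∈ h(b) with S(s,t). -/
universe u

namespace ContactRep

variable {R : Type u} [BooleanAlgebra R]

def IsFil (F : Set R) : Prop :=
  F.Nonempty ∧ (∀ x ∈ F, ∀ y, x ≤ y → y ∈ F) ∧ (∀ x ∈ F, ∀ y ∈ F, x ⊓ y ∈ F)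

def IsUF (u : Set R) : Prop := IsFil u ∧ ⊥ ∉ u ∧ ∀ x : R, x ∈ u ∨ xᶜ ∈ u

def gen (F : Set R) (x : R) : Set R := {z | ∃ f ∈ F, f ⊓ x ≤ z}

lemma subset_gen {F : Set R} (x : R) : F ⊆ gen F x :=
  fun f hf => ⟨f, hf, inf_le_left⟩

lemma mem_gen {F : Set R} (hF : F.Nonempty) (x : R) : x ∈ gen F x := by
  obtain ⟨f, hf⟩ := hF; exact ⟨f, hf, inf_le_right⟩

lemma gen_fil {F : Set R} (hF : IsFil F) (x : R) : IsFil (gen F x) := by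
  obtain ⟨hne, hup, hinf⟩ := hF
  refine ⟨hne.mono (subset_gen x), ?_, ?_⟩
  · rintro z ⟨f, hf, hfz⟩ y hzy; exact ⟨f, hf, hfz.trans hzy⟩
  · rintro z1 ⟨f1, hf1, h1⟩ z2 ⟨f2, hf2, h2⟩
    refine ⟨f1 ⊓ f2, hinf _ hf1 _ hf2, le_inf ?_ ?_⟩
    · exact le_trans (inf_le_inf_right x inf_le_left) h1
    · exact le_trans (inf_le_inf_right x inf_le_right) h2

/-- The key dichotomy: given a contact-linked pair of filters, we can add `x` or `xᶜ`
to the first component. -/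
lemma step (C : R → R → Prop)
    (CA1 : ∀ a b d e : R, C a b → a ≤ d → b ≤ e → C d e)
    (CA2 : ∀ a b d e : R, C (a ⊔ d) (b ⊔ e) → C a b ∨ C a e ∨ C d b ∨ C d e)
    {F G : Set R} (hF : IsFil F) (hG : IsFil G)
    (hCFG : ∀ x ∈ F, ∀ y ∈ G, C x y) (x : R) :
    (∀ z ∈ gen F x, ∀ y ∈ G, C z y) ∨ (∀ z ∈ gen F xᶜ, ∀ y ∈ G, C z y) := by
  by_contra hcon
  push_neg at hcon
  obtain ⟨⟨z1, ⟨f1, hf1, h1⟩, y1, hy1, hC1⟩, ⟨z2, ⟨f2, hf2, h2⟩, y2, hy2, hC2⟩⟩ := hcon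
  set f := f1 ⊓ f2 with hf
  set g := y1 ⊓ y2 with hg
  have hfF : f ∈ F := hF.2.2 _ hf1 _ hf2
  have hgG : g ∈ G := hG.2.2 _ hy1 _ hy2
  have hCfg : C f g := hCFG _ hfF _ hgG
  have hsplit : f = (f ⊓ x) ⊔ (f ⊓ xᶜ) := by
    rw [← inf_sup_left, sup_compl_eq_top, inf_top_eq]
  have hCfg' : C ((f ⊓ x) ⊔ (f ⊓ xᶜ)) (g ⊔ g) := by rwa [← hsplit, sup_idem]
  have hle1 : ∀ h : C (f ⊓ x) g, False := by
    intro h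
    exact hC1 (CA1 _ _ _ _ h
      (le_trans (inf_le_inf_right x inf_le_left) h1)
      inf_le_left)
  have hle2 : ∀ h : C (f ⊓ xᶜ) g, False := by
    intro h
    exact hC2 (CA1 _ _ _ _ h
      (le_trans (inf_le_inf_right xᶜ inf_le_right) h2)
      inf_le_right)
  rcases CA2 _ _ _ _ hCfg' with h | h | h | h
  exacts [hle1 h, hle1 h, hle2 h, hle2 h]

/-- Main extension lemma: every contact pair extends to a linked pair of ultrafilters. -/
lemma pair_extension (C : R → R → Prop)
    (CA1 : ∀ a b d e : R, C a b → a ≤ d → b ≤ e → C d e)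
    (CA2 : ∀ a b d e : R, C (a ⊔ d) (b ⊔ e) → C a b ∨ C a e ∨ C d b ∨ C d e)
    (CA3 : ∀ a b : R, C a b → a ≠ ⊥ ∧ b ≠ ⊥)
    (_CA5 : ∀ a b : R, C a b → C b a)
    {a b : R} (hab : C a b) :
    ∃ u v : Set R, IsUF u ∧ IsUF v ∧ a ∈ u ∧ b ∈ v ∧ ∀ x ∈ u, ∀ y ∈ v, C x y := by
  set T : Set (Set R × Set R) :=
    {p | IsFil p.1 ∧ IsFil p.2 ∧ a ∈ p.1 ∧ b ∈ p.2 ∧ ∀ x ∈ p.1, ∀ y ∈ p.2, C x y} with hT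
  have hIci : ∀ c : R, IsFil (Set.Ici c) := by
    intro c
    exact ⟨⟨c, le_rfl⟩, fun x hx y hxy => le_trans hx hxy,
      fun x hx y hy => le_inf hx hy⟩
  have hinit : (Set.Ici a, Set.Ici b) ∈ T := by
    refine ⟨hIci a, hIci b, le_rfl, le_rfl, ?_⟩
    intro x hx y hy
    exact CA1 _ _ _ _ hab hx hy
  have key : ∀ c ⊆ T, IsChain (· ≤ ·) c → ∀ p ∈ c, ∃ ub ∈ T, ∀ z ∈ c, z ≤ ub := by
    intro c hcT hchain p hpc
    refine ⟨(⋃ q ∈ c, q.1, ⋃ q ∈ c, q.2), ⟨?_, ?_, ?_, ?_, ?_⟩, ?_⟩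
    · -- filter on first component
      refine ⟨⟨a, Set.mem_biUnion hpc (hcT hpc).2.2.1⟩, ?_, ?_⟩
      · rintro x hx y hxy
        simp only [Set.mem_iUnion] at hx ⊢
        obtain ⟨q, hq, hxq⟩ := hx
        exact ⟨q, hq, (hcT hq).1.2.1 _ hxq _ hxy⟩
      · rintro x hx y hy
        simp only [Set.mem_iUnion] at hx hy ⊢
        obtain ⟨q, hq, hxq⟩ := hx
        obtain ⟨r, hr, hyr⟩ := hy
        rcases hchain.total hq hr with hqr | hrq
        · exact ⟨r, hr, (hcT hr).1.2.2 _ (hqr.1 hxq) _ hyr⟩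
        · exact ⟨q, hq, (hcT hq).1.2.2 _ hxq _ (hrq.1 hyr)⟩
    · refine ⟨⟨b, Set.mem_biUnion hpc (hcT hpc).2.2.2.1⟩, ?_, ?_⟩
      · rintro x hx y hxy
        simp only [Set.mem_iUnion] at hx ⊢
        obtain ⟨q, hq, hxq⟩ := hx
        exact ⟨q, hq, (hcT hq).2.1.2.1 _ hxq _ hxy⟩
      · rintro x hx y hy
        simp only [Set.mem_iUnion] at hx hy ⊢
        obtain ⟨q, hq, hxq⟩ := hx
        obtain ⟨r, hr, hyr⟩ := hy
        rcases hchain.total hq hr with hqr | hrq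
        · exact ⟨r, hr, (hcT hr).2.1.2.2 _ (hqr.2 hxq) _ hyr⟩
        · exact ⟨q, hq, (hcT hq).2.1.2.2 _ hxq _ (hrq.2 hyr)⟩
    · exact Set.mem_biUnion hpc (hcT hpc).2.2.1
    · exact Set.mem_biUnion hpc (hcT hpc).2.2.2.1
    · rintro x hx y hy
      simp only [Set.mem_iUnion] at hx hy
      obtain ⟨q, hq, hxq⟩ := hx
      obtain ⟨r, hr, hyr⟩ := hy
      rcases hchain.total hq hr with hqr | hrq
      · exact (hcT hr).2.2.2.2 _ (hqr.1 hxq) _ hyr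
      · exact (hcT hq).2.2.2.2 _ hxq _ (hrq.2 hyr)
    · intro q hq
      exact ⟨Set.subset_biUnion_of_mem hq, Set.subset_biUnion_of_mem hq⟩
  obtain ⟨m, -, hmax⟩ := zorn_le_nonempty₀ T key _ hinit
  obtain ⟨hF, hG, haF, hbG, hCFG⟩ := hmax.prop
  have hmax' := fun {y} => hmax.le_of_ge (y := y)
  -- F := m.1, G := m.2
  have hbotF : ⊥ ∉ m.1 := fun h => (CA3 _ _ (hCFG _ h _ hbG)).1 rfl
  have hbotG : ⊥ ∉ m.2 := fun h => (CA3 _ _ (hCFG _ haF _ h)).2 rfl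
  have hufF : ∀ x : R, x ∈ m.1 ∨ xᶜ ∈ m.1 := by
    intro x
    rcases step C CA1 CA2 hF hG hCFG x with h | h
    · left
      have : (gen m.1 x, m.2) ∈ T :=
        ⟨gen_fil hF x, hG, subset_gen x haF, hbG, h⟩
      have hle := hmax' this ⟨subset_gen x, le_rfl⟩
      exact hle.1 (mem_gen hF.1 x)
    · right
      have : (gen m.1 xᶜ, m.2) ∈ T :=
        ⟨gen_fil hF xᶜ, hG, subset_gen xᶜ haF, hbG, h⟩
      have hle := hmax' this ⟨subset_gen xᶜ, le_rfl⟩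
      exact hle.1 (mem_gen hF.1 xᶜ)
  have hufG : ∀ x : R, x ∈ m.2 ∨ xᶜ ∈ m.2 := by
    intro x
    have hCGF : ∀ y ∈ m.2, ∀ z ∈ m.1, (fun p q => C q p) y z := fun y hy z hz => hCFG _ hz _ hy
    have CA1' : ∀ a b d e : R, C b a → a ≤ d → b ≤ e → C e d :=
      fun a b d e h h1 h2 => CA1 _ _ _ _ h h2 h1
    rcases step (fun p q => C q p) (fun a b d e h h1 h2 => CA1 _ _ _ _ h h2 h1)
      (fun a b d e h => by
        rcases CA2 _ _ _ _ h with h' | h' | h' | h'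
        · exact Or.inl h'
        · exact Or.inr (Or.inr (Or.inl h'))
        · exact Or.inr (Or.inl h')
        · exact Or.inr (Or.inr (Or.inr h'))) hG hF hCGF x with h | h
    · left
      have : (m.1, gen m.2 x) ∈ T :=
        ⟨hF, gen_fil hG x, haF, subset_gen x hbG, fun p hp q hq => h _ hq _ hp⟩
      have hle := hmax' this ⟨le_rfl, subset_gen x⟩
      exact hle.2 (mem_gen hG.1 x)
    · right
      have : (m.1, gen m.2 xᶜ) ∈ T :=
        ⟨hF, gen_fil hG xᶜ, haF, subset_gen xᶜ hbG, fun p hp q hq => h _ hq _ hp⟩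
      have hle := hmax' this ⟨le_rfl, subset_gen xᶜ⟩
      exact hle.2 (mem_gen hG.1 xᶜ)
  exact ⟨m.1, m.2, ⟨hF, hbotF, hufF⟩, ⟨hG, hbotG, hufG⟩, haF, hbG, hCFG⟩

end ContactRep

/-- Relational representation of contact algebras: every contact
algebra embeds in the powerset contact algebra of a frame with a reflexive and
symmetric relation. -/
theorem contact_algebra_relational_representation {R : Type u} [BooleanAlgebra R]
    [Nontrivial R]
    (C : R → R → Prop)
    (CA1 : ∀ a b d e : R, C a b → a ≤ d → b ≤ e → C d e)
    (CA2 : ∀ a b d e : R, C (a ⊔ d) (b ⊔ e) → C a b ∨ C a e ∨ C d b ∨ C d e)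
    (CA3 : ∀ a b : R, C a b → a ≠ ⊥ ∧ b ≠ ⊥)
    (CA4 : ∀ a : R, a ≠ ⊥ → C a a)
    (CA5 : ∀ a b : R, C a b → C b a) :
    ∃ (W : Type u) (_ : Nonempty W) (S : W → W → Prop) (h : R → Set W),
      (∀ s : W, S s s) ∧
      (∀ s t : W, S s t → S t s) ∧
      Function.Injective h ∧
      h ⊥ = ∅ ∧
      (∀ a : R, h aᶜ = (h a)ᶜ) ∧
      (∀ a b : R, h (a ⊔ b) = h a ∪ h b) ∧
      (∀ a b : R, C a b ↔ ∃ s ∈ h a, ∃ t ∈ h b, S s t) := by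
  classical
  refine ⟨{u : Set R // ContactRep.IsUF u}, ?_,
    fun u v => ∀ x ∈ u.1, ∀ y ∈ v.1, C x y,
    fun a => {u | a ∈ u.1}, ?_, ?_, ?_, ?_, ?_, ?_, ?_⟩
  -- existence of an ultrafilter containing a given nonzero element
  case _ =>
    have htop : (⊤ : R) ≠ ⊥ := top_ne_bot
    obtain ⟨u, -, hu, -, -, -, -⟩ :=
      ContactRep.pair_extension C CA1 CA2 CA3 CA5 (CA4 ⊤ htop)
    exact ⟨⟨u, hu⟩⟩
  · -- reflexive
    rintro ⟨u, huf, hbot, -⟩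
    intro x hx y hy
    have hxy : x ⊓ y ∈ u := huf.2.2 _ hx _ hy
    have hne : x ⊓ y ≠ ⊥ := fun h => hbot (h ▸ hxy)
    exact CA1 _ _ _ _ (CA4 _ hne) inf_le_left inf_le_right
  · -- symmetric
    intro u v hS x hx y hy
    exact CA5 _ _ (hS _ hy _ hx)
  · -- injective
    have hle : ∀ a b : R, {u : {u : Set R // ContactRep.IsUF u} | a ∈ u.1} ⊆
        {u | b ∈ u.1} → a ≤ b := by
      intro a b hsub
      by_contra hab
      have hne : a ⊓ bᶜ ≠ ⊥ := by
        intro h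
        exact hab (sdiff_eq_bot_iff.mp (by rw [sdiff_eq]; exact h))
      obtain ⟨u, -, hu, -, hau, -, -⟩ :=
        ContactRep.pair_extension C CA1 CA2 CA3 CA5 (CA4 _ hne)
      have hau' : a ∈ u := hu.1.2.1 _ hau _ inf_le_left
      have hbcu : bᶜ ∈ u := hu.1.2.1 _ hau _ inf_le_right
      have hbu : b ∈ u := @hsub ⟨u, hu⟩ hau'
      have : (⊥ : R) ∈ u := by
        have := hu.1.2.2 _ hbu _ hbcu
        rwa [inf_compl_eq_bot] at this
      exact hu.2.1 this
    intro a b hab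
    exact le_antisymm (hle a b (le_of_eq hab)) (hle b a (ge_of_eq hab))
  · -- h ⊥ = ∅
    ext u
    simp only [Set.mem_setOf_eq, Set.mem_empty_iff_false, iff_false]
    exact u.2.2.1
  · -- complement
    intro a
    ext u
    simp only [Set.mem_setOf_eq, Set.mem_compl_iff]
    constructor
    · intro hca ha
      have := u.2.1.2.2 _ ha _ hca
      rw [inf_compl_eq_bot] at this
      exact u.2.2.1 this
    · intro ha
      rcases u.2.2.2 a with h | h
      · exact absurd h ha
      · exact h
  · -- join
    intro a b
    ext u
    simp only [Set.mem_setOf_eq, Set.mem_union]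
    constructor
    · intro hab
      by_contra hcon
      push_neg at hcon
      rcases u.2.2.2 a with ha | hac
      · exact hcon.1 ha
      have : (a ⊔ b) ⊓ aᶜ ∈ u.1 := u.2.1.2.2 _ hab _ hac
      have hb : b ∈ u.1 := by
        refine u.2.1.2.1 _ this _ ?_
        rw [inf_sup_right]
        simp
      exact hcon.2 hb
    · rintro (h | h)
      · exact u.2.1.2.1 _ h _ le_sup_left
      · exact u.2.1.2.1 _ h _ le_sup_right
  · -- contact iff
    intro a b
    constructor
    · intro hab
      obtain ⟨u, v, hu, hv, hau, hbv, hC⟩ :=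
        ContactRep.pair_extension C CA1 CA2 CA3 CA5 hab
      exact ⟨⟨u, hu⟩, hau, ⟨v, hv⟩, hbv, hC⟩
    · rintro ⟨s, hs, t, ht, hS⟩
      exact hS _ hs _ ht
end

section
/- Let (R,0,*,∪,⊢_R) be an extended contact algebra. Then there exists a topological space X and an injective map h : R → 𝒫(X) whose values are regular closed subsets of X, such that h(0) = ∅, h(a*) = Cl(X \ h(a)), h(a ∪ b) = h(a) ∪ h(b), and for all a,b,d ∈ R: (a,b) ⊢_R d iff h(a) ∩ h(b) ⊆ h(d). Moreover, if R is finite then X can be chosen finite and h surjective onto the set of regular closed subsets of X. -/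
universe u

section ECAAux

variable {R : Type u} [BooleanAlgebra R] (vdash : R → R → R → Prop)

/-- A point of the canonical space: a proper prime `⊢`-grill. -/
def ECApt (Γ : Set R) : Prop :=
  (⊤ : R) ∈ Γ ∧ (⊥ : R) ∉ Γ ∧ (∀ x y : R, x ≤ y → x ∈ Γ → y ∈ Γ) ∧
    (∀ x y : R, x ⊔ y ∈ Γ → x ∈ Γ ∨ y ∈ Γ) ∧
    (∀ p q f : R, vdash p q f → p ∈ Γ → q ∈ Γ → f ∈ Γ)

/-- The canonical space. -/
abbrev ECAX := {Γ : Set R // ECApt vdash Γ}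

/-- The canonical embedding. -/
def ECAh (a : R) : Set (ECAX vdash) := {Γ | a ∈ Γ.1}

instance ECAtop : TopologicalSpace (ECAX vdash) :=
  TopologicalSpace.generateFrom (Set.range fun a : R => (ECAh vdash a)ᶜ)

variable {vdash}

theorem eca_compl_le_of_sup_eq_top {b c : R} (h : b ⊔ c = ⊤) : bᶜ ≤ c := by
  have h1 : bᶜ ⊓ b = ⊥ := by simp
  calc bᶜ = bᶜ ⊓ (b ⊔ c) := by rw [h, inf_top_eq]
    _ = bᶜ ⊓ b ⊔ bᶜ ⊓ c := inf_sup_left _ _ _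
    _ = bᶜ ⊓ c := by rw [h1, bot_sup_eq]
    _ ≤ c := inf_le_right

theorem eca_mono3
    (ECA2 : ∀ a b d e f : R, vdash a b d → vdash a b e → vdash d e f → vdash a b f)
    (ECA3 : ∀ a b f : R, (a ≤ f ∨ b ≤ f) → vdash a b f)
    {a b f g : R} (h : vdash a b f) (hfg : f ≤ g) : vdash a b g :=
  ECA2 a b f f g h h (ECA3 f f g (Or.inl hfg))

/-- The key separation lemma: if `¬ vdash a b d` then there is a point containing
`a` and `b` but not `d`. -/
theorem eca_sep
    (ECA1 : ∀ a b d e f : R, vdash a b f → vdash (a ⊔ d) (b ⊔ e) (d ⊔ e ⊔ f))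
    (ECA2 : ∀ a b d e f : R, vdash a b d → vdash a b e → vdash d e f → vdash a b f)
    (ECA3 : ∀ a b f : R, (a ≤ f ∨ b ≤ f) → vdash a b f)
    {a b d : R} (h : ¬ vdash a b d) :
    ∃ Γ : Set R, ECApt vdash Γ ∧ a ∈ Γ ∧ b ∈ Γ ∧ d ∉ Γ := by
  classical
  set S : Set (Set R) := {I | d ∈ I ∧ (∀ x y : R, x ≤ y → y ∈ I → x ∈ I) ∧
      (∀ x y : R, x ∈ I → y ∈ I → x ⊔ y ∈ I) ∧ (∀ i ∈ I, ¬ vdash a b i)} with hSdef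
  have hmem : {z : R | z ≤ d} ∈ S :=
    ⟨le_refl d, fun x y hxy hy => le_trans hxy hy,
      fun x y hx hy => sup_le hx hy, fun i hi hv => h (eca_mono3 ECA2 ECA3 hv hi)⟩
  obtain ⟨I, -, hImax⟩ := zorn_subset_nonempty S (fun c hcS hchain hcne => by
    obtain ⟨I0, hI0⟩ := hcne
    refine ⟨⋃₀ c, ⟨⟨I0, hI0, (hcS hI0).1⟩, ?_, ?_, ?_⟩, fun s hs => Set.subset_sUnion_of_mem hs⟩
    · rintro x y hxy ⟨J, hJ, hyJ⟩
      exact ⟨J, hJ, (hcS hJ).2.1 x y hxy hyJ⟩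
    · rintro x y ⟨J, hJ, hxJ⟩ ⟨K, hK, hyK⟩
      rcases hchain.total hJ hK with hJK | hKJ
      · exact ⟨K, hK, (hcS hK).2.2.1 x y (hJK hxJ) hyK⟩
      · exact ⟨J, hJ, (hcS hJ).2.2.1 x y hxJ (hKJ hyK)⟩
    · rintro i ⟨J, hJ, hiJ⟩
      exact (hcS hJ).2.2.2 i hiJ) _ hmem
  obtain ⟨hdI, hIdown, hIsup, hIinv⟩ := hImax.prop
  have key : ∀ x : R, x ∉ I → ∃ i ∈ I, vdash a b (i ⊔ x) := by
    intro x hx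
    by_contra hcon
    push_neg at hcon
    have hJS : {z : R | ∃ i ∈ I, z ≤ i ⊔ x} ∈ S := by
      refine ⟨⟨d, hdI, le_sup_left⟩, ?_, ?_, ?_⟩
      · rintro z w hzw ⟨i, hi, hw⟩
        exact ⟨i, hi, le_trans hzw hw⟩
      · rintro z w ⟨i, hi, hz⟩ ⟨j, hj, hw⟩
        refine ⟨i ⊔ j, hIsup i j hi hj, sup_le ?_ ?_⟩
        · exact le_trans hz (sup_le_sup_right le_sup_left x)
        · exact le_trans hw (sup_le_sup_right le_sup_right x)
      · rintro z ⟨i, hi, hz⟩ hv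
        exact hcon i hi (eca_mono3 ECA2 ECA3 hv hz)
    have hIJ : I ⊆ {z : R | ∃ i ∈ I, z ≤ i ⊔ x} := fun i hi => ⟨i, hi, le_sup_left⟩
    have hJI := hImax.2 hJS hIJ
    exact hx (hJI ⟨d, hdI, le_sup_right⟩)
  refine ⟨Iᶜ, ⟨?_, ?_, ?_, ?_, ?_⟩, ?_, ?_, ?_⟩
  · exact fun hT => hIinv ⊤ hT (ECA3 a b ⊤ (Or.inl le_top))
  · exact fun hb => hb (hIdown ⊥ d bot_le hdI)
  · exact fun x y hxy hx hy => hx (hIdown x y hxy hy)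
  · intro x y hxy
    by_contra hc
    push_neg at hc
    obtain ⟨hx, hy⟩ := hc
    simp only [Set.mem_compl_iff, not_not] at hx hy
    exact hxy (hIsup x y hx hy)
  · intro p q f hpq hp hq hf
    obtain ⟨i, hi, hvi⟩ := key p hp
    obtain ⟨j, hj, hvj⟩ := key q hq
    set k := i ⊔ j ⊔ f with hk
    have hkI : k ∈ I := hIsup _ _ (hIsup _ _ hi hj) hf
    have hik : i ≤ k := le_trans le_sup_left le_sup_left
    have hjk : j ≤ k := le_trans le_sup_right le_sup_left
    have hfk : f ≤ k := le_sup_right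
    have h1 : vdash a b (p ⊔ k) :=
      eca_mono3 ECA2 ECA3 hvi (sup_le (le_trans hik le_sup_right) le_sup_left)
    have h2 : vdash a b (q ⊔ k) :=
      eca_mono3 ECA2 ECA3 hvj (sup_le (le_trans hjk le_sup_right) le_sup_left)
    have h3 : vdash (p ⊔ k) (q ⊔ k) (k ⊔ k ⊔ f) := ECA1 p q k k f hpq
    have h4 : k ⊔ k ⊔ f = k := by rw [sup_idem, sup_eq_left.mpr hfk]
    rw [h4] at h3
    exact hIinv k hkI (ECA2 a b (p ⊔ k) (q ⊔ k) k h1 h2 h3)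
  · exact fun ha => hIinv a ha (ECA3 a b a (Or.inl le_rfl))
  · exact fun hb => hIinv b hb (ECA3 a b b (Or.inr le_rfl))
  · exact fun hd => hd hdI

theorem eca_sep'
    (ECA1 : ∀ a b d e f : R, vdash a b f → vdash (a ⊔ d) (b ⊔ e) (d ⊔ e ⊔ f))
    (ECA2 : ∀ a b d e f : R, vdash a b d → vdash a b e → vdash d e f → vdash a b f)
    (ECA3 : ∀ a b f : R, (a ≤ f ∨ b ≤ f) → vdash a b f)
    (ECA4 : ∀ a b f : R, vdash a b f → a ⊓ b ≤ f)
    {x c : R} (h : ¬ x ≤ c) :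
    ∃ Γ : Set R, ECApt vdash Γ ∧ x ∈ Γ ∧ c ∉ Γ := by
  have hnv : ¬ vdash x x c := fun hv => h (by simpa using ECA4 x x c hv)
  obtain ⟨Γ, hΓ, hx, -, hc⟩ := eca_sep ECA1 ECA2 ECA3 hnv
  exact ⟨Γ, hΓ, hx, hc⟩

theorem eca_h_mono {a b : R} (hab : a ≤ b) : ECAh vdash a ⊆ ECAh vdash b :=
  fun Γ ha => Γ.2.2.2.1 a b hab ha

theorem eca_h_sup (a b : R) : ECAh vdash (a ⊔ b) = ECAh vdash a ∪ ECAh vdash b := by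
  ext Γ
  constructor
  · exact fun h => Γ.2.2.2.2.1 a b h
  · rintro (h | h)
    · exact eca_h_mono le_sup_left h
    · exact eca_h_mono le_sup_right h

theorem eca_h_bot : ECAh vdash ⊥ = ∅ :=
  Set.eq_empty_iff_forall_notMem.mpr fun Γ hΓ => Γ.2.2.1 hΓ

theorem eca_basis :
    TopologicalSpace.IsTopologicalBasis (Set.range fun a : R => (ECAh vdash a)ᶜ) := by
  refine ⟨?_, ?_, rfl⟩
  · rintro t₁ ⟨x, rfl⟩ t₂ ⟨y, rfl⟩ Γ ⟨h1, h2⟩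
    refine ⟨(ECAh vdash (x ⊔ y))ᶜ, ⟨x ⊔ y, rfl⟩, ?_, ?_⟩
    · intro hxy
      rcases Γ.2.2.2.2.1 x y hxy with h | h
      · exact h1 h
      · exact h2 h
    · rintro Δ hΔ
      exact ⟨fun h => hΔ (eca_h_mono le_sup_left h),
        fun h => hΔ (eca_h_mono le_sup_right h)⟩
  · apply Set.eq_univ_of_univ_subset
    intro Γ _
    exact Set.mem_sUnion.mpr ⟨(ECAh vdash ⊥)ᶜ, ⟨⊥, rfl⟩, fun h => Γ.2.2.1 h⟩

section WithAxioms

variable (ECA1 : ∀ a b d e f : R, vdash a b f → vdash (a ⊔ d) (b ⊔ e) (d ⊔ e ⊔ f))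
variable (ECA2 : ∀ a b d e f : R, vdash a b d → vdash a b e → vdash d e f → vdash a b f)
variable (ECA3 : ∀ a b f : R, (a ≤ f ∨ b ≤ f) → vdash a b f)
variable (ECA4 : ∀ a b f : R, vdash a b f → a ⊓ b ≤ f)

include ECA1 ECA2 ECA3 ECA4

theorem eca_compl_subset_iff {b c : R} :
    (ECAh vdash b)ᶜ ⊆ ECAh vdash c ↔ b ⊔ c = ⊤ := by
  constructor
  · intro hsub
    by_contra hne
    obtain ⟨Γ, hΓ, -, hbc⟩ :=
      eca_sep' ECA1 ECA2 ECA3 ECA4 (x := (⊤ : R)) (c := b ⊔ c)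
        (fun hle => hne (top_unique hle))
    have hb : b ∉ Γ := fun hb => hbc (hΓ.2.2.1 b (b ⊔ c) le_sup_left hb)
    have hc : c ∉ Γ := fun hc => hbc (hΓ.2.2.1 c (b ⊔ c) le_sup_right hc)
    exact hc (hsub (show (⟨Γ, hΓ⟩ : ECAX vdash) ∈ (ECAh vdash b)ᶜ from hb))
  · intro htop Γ hΓb
    have hbc : b ⊔ c ∈ Γ.1 := by rw [htop]; exact Γ.2.1
    rcases Γ.2.2.2.2.1 b c hbc with h | h
    · exact absurd h hΓb
    · exact h

theorem eca_interior_h (a : R) :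
    interior (ECAh vdash a) = (ECAh vdash aᶜ)ᶜ := by
  apply subset_antisymm
  · intro Γ hΓ
    rw [mem_interior_iff_mem_nhds] at hΓ
    obtain ⟨t, ⟨b, rfl⟩, hΓt, hts⟩ := (eca_basis (vdash := vdash)).mem_nhds_iff.mp hΓ
    have hba : b ⊔ a = ⊤ := (eca_compl_subset_iff ECA1 ECA2 ECA3 ECA4).mp hts
    have hcb : aᶜ ≤ b := by
      have : bᶜ ≤ a := eca_compl_le_of_sup_eq_top hba
      calc aᶜ ≤ bᶜᶜ := compl_le_compl this
        _ = b := compl_compl b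
    intro haΓ
    exact hΓt (Γ.2.2.2.1 aᶜ b hcb haΓ)
  · apply interior_maximal
    · intro Γ h1
      have : a ⊔ aᶜ ∈ Γ.1 := by rw [sup_compl_eq_top]; exact Γ.2.1
      rcases Γ.2.2.2.2.1 a aᶜ this with h | h
      · exact h
      · exact absurd h h1
    · exact (eca_basis (vdash := vdash)).isOpen ⟨aᶜ, rfl⟩

theorem eca_closure_compl_h (b : R) :
    closure ((ECAh vdash b)ᶜ) = ECAh vdash bᶜ := by
  apply subset_antisymm
  · apply closure_minimal
    · intro Γ hb
      have : b ⊔ bᶜ ∈ Γ.1 := by rw [sup_compl_eq_top]; exact Γ.2.1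
      rcases Γ.2.2.2.2.1 b bᶜ this with h | h
      · exact absurd h hb
      · exact h
    · exact isOpen_compl_iff.mp ((eca_basis (vdash := vdash)).isOpen ⟨bᶜ, rfl⟩)
  · intro Γ hΓ
    rw [(eca_basis (vdash := vdash)).mem_closure_iff]
    rintro o ⟨c, rfl⟩ hΓo
    have hne : b ⊔ c ≠ ⊤ := by
      intro htop
      have : bᶜ ≤ c := eca_compl_le_of_sup_eq_top htop
      exact hΓo (Γ.2.2.2.1 bᶜ c this hΓ)
    obtain ⟨Δ, hΔ, -, hbc⟩ :=
      eca_sep' ECA1 ECA2 ECA3 ECA4 (x := (⊤ : R)) (c := b ⊔ c)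
        (fun hle => hne (top_unique hle))
    exact ⟨⟨Δ, hΔ⟩, fun h => hbc (hΔ.2.2.1 c (b ⊔ c) le_sup_right h),
      fun h => hbc (hΔ.2.2.1 b (b ⊔ c) le_sup_left h)⟩

end WithAxioms

theorem eca_h_finsetSup [DecidableEq R] (g : R → R) (s : Finset R) :
    ECAh vdash (s.sup g) = ⋃ b ∈ s, ECAh vdash (g b) := by
  classical
  induction s using Finset.induction_on with
  | empty => simp [eca_h_bot]
  | insert _ _ hnotmem ih =>
      rw [Finset.sup_insert, eca_h_sup, ih]
      simp

end ECAAux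

/-- Topological representation of extended contact algebras: every
extended contact algebra embeds in the standard extended contact algebra of regular
closed sets of some topological space; if the algebra is finite, the space can be
chosen finite and the embedding surjective onto the regular closed sets. -/
theorem eca_topological_representation {R : Type u} [BooleanAlgebra R] [Nontrivial R]
    (vdash : R → R → R → Prop)
    (ECA1 : ∀ a b d e f : R, vdash a b f → vdash (a ⊔ d) (b ⊔ e) (d ⊔ e ⊔ f))
    (ECA2 : ∀ a b d e f : R, vdash a b d → vdash a b e → vdash d e f → vdash a b f)
    (ECA3 : ∀ a b f : R, (a ≤ f ∨ b ≤ f) → vdash a b f)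
    (ECA4 : ∀ a b f : R, vdash a b f → a ⊓ b ≤ f)
    (ECA5 : ∀ a b f : R, vdash a b f → vdash b a f) :
    ∃ (X : Type u) (_ : TopologicalSpace X) (h : R → Set X),
      (∀ a : R, closure (interior (h a)) = h a) ∧
      Function.Injective h ∧
      h ⊥ = ∅ ∧
      (∀ a : R, h aᶜ = closure ((h a)ᶜ)) ∧
      (∀ a b : R, h (a ⊔ b) = h a ∪ h b) ∧
      (∀ a b d : R, vdash a b d ↔ h a ∩ h b ⊆ h d) ∧
      (Finite R → Finite X ∧
        ∀ A : Set X, closure (interior A) = A → ∃ a : R, h a = A) := by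
  classical
  refine ⟨ECAX vdash, ECAtop vdash, ECAh vdash, ?_, ?_, ?_, ?_, ?_, ?_, ?_⟩
  · intro a
    rw [eca_interior_h ECA1 ECA2 ECA3 ECA4,
      eca_closure_compl_h ECA1 ECA2 ECA3 ECA4, compl_compl]
  · intro a b hab
    by_contra hne
    have hor : ¬ a ≤ b ∨ ¬ b ≤ a := by
      by_contra hc
      push_neg at hc
      exact hne (le_antisymm hc.1 hc.2)
    rcases hor with hle | hle
    · obtain ⟨Γ, hΓ, ha, hb⟩ := eca_sep' ECA1 ECA2 ECA3 ECA4 hle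
      exact hb (show (⟨Γ, hΓ⟩ : ECAX vdash) ∈ ECAh vdash b from hab ▸ ha)
    · obtain ⟨Γ, hΓ, hb, ha⟩ := eca_sep' ECA1 ECA2 ECA3 ECA4 hle
      exact ha (show (⟨Γ, hΓ⟩ : ECAX vdash) ∈ ECAh vdash a from hab.symm ▸ hb)
  · exact eca_h_bot
  · intro a
    exact (eca_closure_compl_h ECA1 ECA2 ECA3 ECA4 a).symm
  · exact eca_h_sup
  · intro a b d
    constructor
    · rintro hv Γ ⟨ha, hb⟩
      exact Γ.2.2.2.2.2 a b d hv ha hb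
    · intro hsub
      by_contra hnv
      obtain ⟨Γ, hΓ, ha, hb, hd⟩ := eca_sep ECA1 ECA2 ECA3 hnv
      exact hd (hsub (show (⟨Γ, hΓ⟩ : ECAX vdash) ∈ ECAh vdash a ∩ ECAh vdash b from ⟨ha, hb⟩))
  · intro hR
    haveI : Finite (Set R) := inferInstance
    haveI hXfin : Finite (ECAX vdash) := Subtype.finite
    refine ⟨hXfin, ?_⟩
    intro A hA
    haveI := Fintype.ofFinite R
    let s : Finset R := Finset.univ.filter fun b => (ECAh vdash b)ᶜ ⊆ A
    have hint : interior A = ⋃ b ∈ s, (ECAh vdash b)ᶜ := by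
      apply subset_antisymm
      · intro Γ hΓ
        rw [mem_interior_iff_mem_nhds] at hΓ
        obtain ⟨t, ⟨b, rfl⟩, hΓt, hts⟩ := (eca_basis (vdash := vdash)).mem_nhds_iff.mp hΓ
        refine Set.mem_biUnion ?_ hΓt
        exact Finset.mem_filter.mpr ⟨Finset.mem_univ b, hts⟩
      · refine Set.iUnion₂_subset fun b hb => ?_
        refine interior_maximal ?_ ((eca_basis (vdash := vdash)).isOpen ⟨b, rfl⟩)
        exact (Finset.mem_filter.mp hb).2
    refine ⟨s.sup fun b => bᶜ, ?_⟩
    have hclo : closure (⋃ b ∈ s, (ECAh vdash b)ᶜ) = ⋃ b ∈ s, closure ((ECAh vdash b)ᶜ) :=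
      Set.Finite.closure_biUnion s.finite_toSet _
    calc ECAh vdash (s.sup fun b => bᶜ)
        = ⋃ b ∈ s, ECAh vdash bᶜ := eca_h_finsetSup _ s
      _ = ⋃ b ∈ s, closure ((ECAh vdash b)ᶜ) := by
          refine Set.iUnion₂_congr fun b _ => ?_
          rw [eca_closure_compl_h ECA1 ECA2 ECA3 ECA4]
      _ = closure (⋃ b ∈ s, (ECAh vdash b)ᶜ) := hclo.symm
      _ = closure (interior A) := by rw [hint]
      _ = A := hA
end

section
/- Let (R,0,*,∪,⊢) be an extended contact algebra and define the binary relation C on R by C(a,b) iff not (a,b) ⊢ 0. Then C satisfies the contact-algebra axioms (CA1)–(CA5): for all a,b,d,e ∈ R, (CA1) if C(a,b), a ≤ d and b ≤ e then C(d,e); (CA2) if C(a∪d, b∪e) then C(a,b) or C(a,e) or C(d,b) or C(d,e); (CA3) if C(a,b) then a ≠ 0 and b ≠ 0; (CA4) if a ≠ 0 then C(a,a); (CA5) if C(a,b) then C(b,a). -/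
/-- In an extended contact algebra, the relation
`C(a,b) iff ¬ (a,b) ⊢ ⊥` satisfies the contact-algebra axioms (CA1)–(CA5). -/
theorem eca_induced_contact {R : Type*} [BooleanAlgebra R] [Nontrivial R]
    (vdash : R → R → R → Prop)
    (ECA1 : ∀ a b d e f : R, vdash a b f → vdash (a ⊔ d) (b ⊔ e) (d ⊔ e ⊔ f))
    (ECA2 : ∀ a b d e f : R, vdash a b d → vdash a b e → vdash d e f → vdash a b f)
    (ECA3 : ∀ a b f : R, (a ≤ f ∨ b ≤ f) → vdash a b f)
    (ECA4 : ∀ a b f : R, vdash a b f → a ⊓ b ≤ f)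
    (ECA5 : ∀ a b f : R, vdash a b f → vdash b a f)
    (C : R → R → Prop)
    (hC : ∀ a b : R, C a b ↔ ¬ vdash a b ⊥) :
    (∀ a b d e : R, C a b → a ≤ d → b ≤ e → C d e) ∧
    (∀ a b d e : R, C (a ⊔ d) (b ⊔ e) → C a b ∨ C a e ∨ C d b ∨ C d e) ∧
    (∀ a b : R, C a b → a ≠ ⊥ ∧ b ≠ ⊥) ∧
    (∀ a : R, a ≠ ⊥ → C a a) ∧
    (∀ a b : R, C a b → C b a) := by
  -- monotonicity: downward in the first two arguments, upward in the third
  have mono : ∀ a b f a' b' f' : R, vdash a b f → a' ≤ a → b' ≤ b → f ≤ f' →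
      vdash a' b' f' := by
    intro a b f a' b' f' h ha hb hf
    have h1 : vdash a' b' a := ECA3 _ _ _ (Or.inl ha)
    have h2 : vdash a' b' b := ECA3 _ _ _ (Or.inr hb)
    have h3 : vdash a' b' f := ECA2 _ _ _ _ _ h1 h2 h
    exact ECA2 _ _ _ _ _ h3 (ECA3 _ _ _ (Or.inl le_top)) (ECA3 _ _ _ (Or.inl hf))
  refine ⟨?_, ?_, ?_, ?_, ?_⟩
  · -- CA1
    intro a b d e hab had hbe
    rw [hC] at hab ⊢
    intro h
    exact hab (mono _ _ _ _ _ _ h had hbe le_rfl)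
  · -- CA2
    intro a b d e h
    by_contra hcon
    push_neg at hcon
    obtain ⟨h1, h2, h3, h4⟩ := hcon
    rw [hC] at h h1 h2 h3 h4
    rw [not_not] at h1 h2 h3 h4
    apply h; clear h
    set A := a ⊔ d with hA
    set B := b ⊔ e with hB
    -- from vdash a e ⊥ : vdash a B b
    have haBb : vdash a B b := by
      have := ECA1 a e ⊥ b ⊥ h2
      exact mono _ _ _ _ _ _ this le_sup_left (by simp [hB, sup_comm]) (by simp)
    have haB : vdash a B ⊥ :=
      ECA2 _ _ b a ⊥ haBb (ECA3 _ _ _ (Or.inl le_rfl)) (ECA5 _ _ _ h1)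
    -- from vdash d e ⊥ : vdash d B b
    have hdBb : vdash d B b := by
      have := ECA1 d e ⊥ b ⊥ h4
      exact mono _ _ _ _ _ _ this le_sup_left (by simp [hB, sup_comm]) (by simp)
    have hdB : vdash d B ⊥ :=
      ECA2 _ _ b d ⊥ hdBb (ECA3 _ _ _ (Or.inl le_rfl)) (ECA5 _ _ _ h3)
    -- from vdash B d ⊥ : vdash B A a
    have hBAa : vdash B A a := by
      have := ECA1 B d ⊥ a ⊥ (ECA5 _ _ _ hdB)
      exact mono _ _ _ _ _ _ this le_sup_left (by simp [hA, sup_comm]) (by simp)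
    have hBA : vdash B A ⊥ :=
      ECA2 _ _ a B ⊥ hBAa (ECA3 _ _ _ (Or.inl le_rfl)) haB
    exact ECA5 _ _ _ hBA
  · -- CA3
    intro a b hab
    rw [hC] at hab
    constructor
    · rintro rfl; exact hab (ECA3 _ _ _ (Or.inl le_rfl))
    · rintro rfl; exact hab (ECA3 _ _ _ (Or.inr le_rfl))
  · -- CA4
    intro a ha
    rw [hC]
    intro h
    have := ECA4 _ _ _ h
    simp at this
    exact ha this
  · -- CA5
    intro a b hab
    rw [hC] at hab ⊢
    intro h
    exact hab (ECA5 _ _ _ h)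
end
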